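/- arXiv:2403.07698 — 5 statements merged into one kernel-verified Lean document; each statement's English description precedes it below -/
import Mathlib

section
/- Let n ≥ 1 be an integer, m ≥ 1 an integer, s₀ < 0 a constant, and α, α^* real numbers with α < α^*. Let S : ℝ^m → ℝ be a continuous ℤ^m-periodic function with S ≥ s₀ on ℝ^m. Suppose f, u are C² ℤ^m-periodic functions satisfying −Δf + α^* = s₀·e^{(2/n)f} and −Δu + α = S·e^{(2/n)u} on ℝ^m. Then u ≥ f on ℝ^m. -/
open MeasureTheory Real

/-- The Euclidean Laplacian `Δu = ∑ i ∂²u/∂xᵢ²` on `ℝ^m`. -/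
noncomputable def lapl {m : ℕ} (u : EuclideanSpace ℝ (Fin m) → ℝ)
    (x : EuclideanSpace ℝ (Fin m)) : ℝ :=
  ∑ i : Fin m,
    fderiv ℝ (fun y => fderiv ℝ u y (EuclideanSpace.single i 1)) x (EuclideanSpace.single i 1)

/-- The squared Euclidean length of the gradient, `|∇u|² = ∑ i (∂u/∂xᵢ)²`. -/
noncomputable def gradSq {m : ℕ} (u : EuclideanSpace ℝ (Fin m) → ℝ)
    (x : EuclideanSpace ℝ (Fin m)) : ℝ :=
  ∑ i : Fin m, (fderiv ℝ u x (EuclideanSpace.single i 1)) ^ 2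

/-- A function on `ℝ^m` is `ℤ^m`-periodic if it is invariant under all integer translations. -/
def ZPeriodic {m : ℕ} (u : EuclideanSpace ℝ (Fin m) → ℝ) : Prop :=
  ∀ (k : Fin m → ℤ) (x : EuclideanSpace ℝ (Fin m)),
    u (x + (WithLp.equiv 2 (Fin m → ℝ)).symm (fun i => (k i : ℝ))) = u x

/-- The fundamental cell `[0,1]^m`. -/
def unitCell (m : ℕ) : Set (EuclideanSpace ℝ (Fin m)) :=
  {x | ∀ i, x i ∈ Set.Icc (0 : ℝ) 1}

open Filter Topology in
/-- One-dimensional second derivative test at a global maximum. -/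
lemma second_deriv_nonpos_of_max {h : ℝ → ℝ} (hh : ContDiff ℝ 2 h)
    (hmax : ∀ t, h t ≤ h 0) : deriv (deriv h) 0 ≤ 0 := by
  by_contra hp
  push_neg at hp
  have hdh : ContDiff ℝ 1 (deriv h) := by
    have : ContDiff ℝ ((1 : ℕ) + 1) h := by norm_num; exact hh
    exact ((contDiff_succ_iff_deriv).1 this).2.2
  have h0 : deriv h 0 = 0 :=
    IsLocalMax.deriv_eq_zero (IsMaxOn.isLocalMax (fun t _ => hmax t) (Filter.univ_mem))
  have hder : HasDerivAt (deriv h) (deriv (deriv h) 0) 0 :=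
    ((hdh.differentiable one_ne_zero) 0).hasDerivAt
  have hslope := hasDerivAt_iff_tendsto_slope.1 hder
  have hev : ∀ᶠ t in 𝓝[≠] (0:ℝ), 0 < slope (deriv h) 0 t :=
    hslope (Ioi_mem_nhds hp)
  have hev' : ∀ᶠ t in 𝓝[>] (0:ℝ), 0 < deriv h t := by
    have hle : 𝓝[>] (0:ℝ) ≤ 𝓝[≠] (0:ℝ) :=
      nhdsWithin_mono 0 (fun t ht => ne_of_gt ht)
    filter_upwards [hle hev, self_mem_nhdsWithin] with t ht ht'
    have heq : slope (deriv h) 0 t = deriv h t / t := by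
      simp [slope_def_field, h0]
    rw [heq] at ht
    have ht'' : (0:ℝ) < t := ht'
    exact (div_pos_iff.1 ht).elim (fun p => p.1) (fun p => absurd ht'' (not_lt.2 p.2.le))
  obtain ⟨δ, hδ, hsub⟩ := (mem_nhdsGT_iff_exists_Ioo_subset).1 hev'
  have hδ0 : (0:ℝ) < δ := hδ
  have hmono : StrictMonoOn h (Set.Icc 0 (δ/2)) := by
    apply strictMonoOn_of_deriv_pos (convex_Icc _ _) (hh.continuous.continuousOn)
    intro t ht
    rw [interior_Icc] at ht
    exact hsub ⟨ht.1, lt_of_lt_of_le ht.2 (by linarith)⟩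
  have : h 0 < h (δ/2) :=
    hmono ⟨le_rfl, by linarith⟩ ⟨by linarith, le_rfl⟩ (by linarith)
  exact absurd (hmax (δ/2)) (not_le.2 this)

section LineDeriv
variable {E : Type*} [NormedAddCommGroup E] [NormedSpace ℝ E]

lemma line_hasDerivAt (x v : E) (t : ℝ) :
    HasDerivAt (fun s : ℝ => x + s • v) v t := by
  have : HasDerivAt (fun s : ℝ => s • v) ((1:ℝ) • v) t :=
    (hasDerivAt_id t).smul_const v
  simpa using this.const_add x

/-- The second derivative along a line equals the second directional derivative. -/
lemma second_dir_deriv_line {g : E → ℝ} (hg : ContDiff ℝ 2 g) (x v : E) :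
    deriv (deriv (fun t : ℝ => g (x + t • v))) 0
      = fderiv ℝ (fun y => fderiv ℝ g y v) x v := by
  have hgd : Differentiable ℝ g := hg.differentiable (by norm_num)
  have hfd : ContDiff ℝ 1 (fderiv ℝ g) := hg.fderiv_right (le_refl _)
  have hA : deriv (fun t : ℝ => g (x + t • v))
      = fun t => fderiv ℝ g (x + t • v) v := by
    funext t
    exact ((hgd (x + t • v)).hasFDerivAt.comp_hasDerivAt t (line_hasDerivAt x v t)).deriv
  rw [hA]
  have hG : DifferentiableAt ℝ (fun y => fderiv ℝ g y v) x :=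
    ((hfd.differentiable one_ne_zero) x).clm_apply (differentiableAt_const v)
  have hline0 : x + (0:ℝ) • v = x := by simp
  have hG' : HasFDerivAt (fun y => fderiv ℝ g y v)
      (fderiv ℝ (fun y => fderiv ℝ g y v) x) (x + (0:ℝ) • v) := by
    rw [hline0]; exact hG.hasFDerivAt
  exact (hG'.comp_hasDerivAt 0 (line_hasDerivAt x v 0)).deriv

end LineDeriv

/-- The unit cell is compact. -/
lemma unitCell_compact (m : ℕ) : IsCompact (unitCell m) := by
  have h1 : IsCompact (Set.univ.pi fun _ : Fin m => Set.Icc (0:ℝ) 1) :=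
    isCompact_univ_pi fun _ => isCompact_Icc
  have h2 : IsCompact ((EuclideanSpace.equiv (Fin m) ℝ).toHomeomorph ⁻¹'
      (Set.univ.pi fun _ : Fin m => Set.Icc (0:ℝ) 1)) :=
    (EuclideanSpace.equiv (Fin m) ℝ).toHomeomorph.isCompact_preimage.2 h1
  convert h2 using 1
  ext x
  simp only [unitCell, Set.mem_setOf_eq, Set.mem_preimage, Set.mem_pi, Set.mem_univ,
    forall_true_left, Set.mem_Icc]
  rfl

/-- The comparison principle at the core of Lemma 3.3: if `−Δf + α^* = s₀ e^{(2/n)f}` and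
`−Δu + α = S e^{(2/n)u}` with `α < α^*`, `s₀ < 0` and `S ≥ s₀`, then `u ≥ f`. -/
theorem comparison_principle
    (n : ℕ) (hn : 1 ≤ n) (m : ℕ) (hm : 1 ≤ m)
    (s0 : ℝ) (hs0 : s0 < 0) (α αstar : ℝ) (hα : α < αstar)
    (S : EuclideanSpace ℝ (Fin m) → ℝ) (hS : Continuous S) (hSper : ZPeriodic S)
    (hSs0 : ∀ x, s0 ≤ S x)
    (f u : EuclideanSpace ℝ (Fin m) → ℝ)
    (hf : ContDiff ℝ 2 f) (hfper : ZPeriodic f)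
    (hu : ContDiff ℝ 2 u) (huper : ZPeriodic u)
    (hfeq : ∀ x, -lapl f x + αstar = s0 * Real.exp ((2 / (n : ℝ)) * f x))
    (hueq : ∀ x, -lapl u x + α = S x * Real.exp ((2 / (n : ℝ)) * u x)) :
    ∀ x, f x ≤ u x := by
  have hcpos : (0:ℝ) < 2 / (n : ℝ) := by
    have : (0:ℝ) < (n : ℝ) := by exact_mod_cast Nat.lt_of_lt_of_le Nat.zero_lt_one hn
    positivity
  set g : EuclideanSpace ℝ (Fin m) → ℝ := fun y => f y - u y with hgdef
  have hgc : ContDiff ℝ 2 g := hf.sub hu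
  -- existence of a maximum point on the unit cell
  have hne : (unitCell m).Nonempty := ⟨0, fun i => ⟨le_rfl, zero_le_one⟩⟩
  obtain ⟨x₀, hx₀mem, hx₀max⟩ :=
    (unitCell_compact m).exists_isMaxOn hne (hgc.continuous.continuousOn)
  -- the maximum is global by periodicity
  have hper : ZPeriodic g := fun k x => by
    simp only [hgdef]
    rw [hfper k x, huper k x]
  have hglob : ∀ x, g x ≤ g x₀ := by
    intro x
    set k : Fin m → ℤ := fun i => -⌊x i⌋ with hk
    have hy : (x + (WithLp.equiv 2 (Fin m → ℝ)).symm (fun i => (k i : ℝ))) ∈ unitCell m := by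
      intro i
      have he : (x + (WithLp.equiv 2 (Fin m → ℝ)).symm (fun i => (k i : ℝ))) i
          = x i + ((-⌊x i⌋ : ℤ) : ℝ) := rfl
      rw [he]
      push_cast
      constructor
      · linarith [Int.floor_le (x i)]
      · linarith [Int.lt_floor_add_one (x i)]
    calc g x = g (x + (WithLp.equiv 2 (Fin m → ℝ)).symm (fun i => (k i : ℝ))) :=
          (hper k x).symm
      _ ≤ g x₀ := hx₀max hy
  -- the Laplacian of g at the maximum is nonpositive
  have hlapterm : ∀ i : Fin m,
      fderiv ℝ (fun y => fderiv ℝ g y (EuclideanSpace.single i 1)) x₀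
        (EuclideanSpace.single i 1) ≤ 0 := by
    intro i
    set v : EuclideanSpace ℝ (Fin m) := EuclideanSpace.single i 1 with hv
    have hline : ContDiff ℝ 2 (fun t : ℝ => x₀ + t • v) :=
      contDiff_const.add (contDiff_id.smul contDiff_const)
    have hh : ContDiff ℝ 2 (fun t : ℝ => g (x₀ + t • v)) := hgc.comp hline
    have hmax : ∀ t : ℝ, g (x₀ + t • v) ≤ g (x₀ + (0:ℝ) • v) := by
      intro t
      rw [show x₀ + (0:ℝ) • v = x₀ by simp]
      exact hglob _
    have h2d := second_deriv_nonpos_of_max hh hmax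
    rwa [second_dir_deriv_line hgc x₀ v] at h2d
  have hlapg : lapl g x₀ ≤ 0 := Finset.sum_nonpos fun i _ => hlapterm i
  -- lapl g = lapl f - lapl u at x₀
  have hdF : ∀ (w : EuclideanSpace ℝ (Fin m)),
      DifferentiableAt ℝ (fun y => fderiv ℝ f y w) x₀ := fun w =>
    (((hf.fderiv_right (m := 1) (le_refl _)).differentiable one_ne_zero) x₀).clm_apply
      (differentiableAt_const w)
  have hdU : ∀ (w : EuclideanSpace ℝ (Fin m)),
      DifferentiableAt ℝ (fun y => fderiv ℝ u y w) x₀ := fun w =>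
    (((hu.fderiv_right (m := 1) (le_refl _)).differentiable one_ne_zero) x₀).clm_apply
      (differentiableAt_const w)
  have hlapsub : lapl g x₀ = lapl f x₀ - lapl u x₀ := by
    unfold lapl
    rw [← Finset.sum_sub_distrib]
    apply Finset.sum_congr rfl
    intro i _
    have e1 : (fun y => fderiv ℝ g y (EuclideanSpace.single i 1))
        = fun y => fderiv ℝ f y (EuclideanSpace.single i 1)
          - fderiv ℝ u y (EuclideanSpace.single i 1) := by
      funext y
      simp only [hgdef]
      rw [fderiv_fun_sub ((hf.differentiable (by norm_num)) y) ((hu.differentiable (by norm_num)) y)]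
      rfl
    rw [e1, fderiv_fun_sub (hdF _) (hdU _)]
    rfl
  rw [hlapsub] at hlapg
  -- final algebraic comparison at x₀
  have h1 := hfeq x₀
  have h2 := hueq x₀
  have hS0 : s0 * Real.exp ((2 / (n : ℝ)) * u x₀)
      ≤ S x₀ * Real.exp ((2 / (n : ℝ)) * u x₀) :=
    mul_le_mul_of_nonneg_right (hSs0 x₀) (Real.exp_pos _).le
  have hexp : Real.exp ((2 / (n : ℝ)) * f x₀) < Real.exp ((2 / (n : ℝ)) * u x₀) := by
    nlinarith [Real.exp_pos ((2 / (n : ℝ)) * f x₀), Real.exp_pos ((2 / (n : ℝ)) * u x₀)]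
  have hmul : (2 / (n : ℝ)) * f x₀ < (2 / (n : ℝ)) * u x₀ := Real.exp_lt_exp.1 hexp
  have hfu : f x₀ < u x₀ := (mul_lt_mul_iff_right₀ hcpos).1 hmul
  intro x
  have hx := hglob x
  simp only [hgdef] at hx
  linarith
end

section
/- Let n ≥ 2 be an integer, m = 2n, x₀ ∈ ℝ^m, 0 < θ < τ, and let ε₀ > 0, Λ > 0, A > 0, α_* < 0 be given. Then there exists a constant C > 0, depending only on n, θ, τ, ε₀, Λ, A, α_*, such that: for every α ∈ [α_*, 0], every continuous function S on the open ball B_τ(x₀) with −Λ ≤ S ≤ −ε₀ on B_τ(x₀), and every u ∈ C²(B_τ(x₀)) with u ≥ −A satisfying −Δu + α = S·e^{(2/n)u} on B_τ(x₀), one has sup_{B_θ(x₀)} (u + A) ≤ C · max{ (∫_{B_τ(x₀)} (u+A)² dx)^{1/2}, 1 }. -/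
open MeasureTheory Real

open Filter Topology

/-! ### Auxiliary lemmas: second-derivative test at a local maximum -/

/-- Second-derivative test at a local max (1D). -/
lemma aux_second_deriv_nonpos {g g' : ℝ → ℝ} {L : ℝ}
    (hg : ∀ᶠ t in 𝓝 (0:ℝ), HasDerivAt g (g' t) t)
    (hg' : HasDerivAt g' L 0) (hmax : IsLocalMax g 0) : L ≤ 0 := by
  by_contra hL
  push_neg at hL
  have h0 : g' 0 = 0 := hmax.hasDerivAt_eq_zero hg.self_of_nhds
  have hslope : Tendsto (slope g' 0) (𝓝[≠] (0:ℝ)) (𝓝 L) :=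
    hasDerivAt_iff_tendsto_slope.1 hg'
  have hpos : ∀ᶠ t in 𝓝[≠] (0:ℝ), 0 < slope g' 0 t :=
    hslope.eventually (eventually_gt_nhds hL)
  have hpos' : ∀ᶠ t in 𝓝[>] (0:ℝ), 0 < slope g' 0 t :=
    hpos.filter_mono (nhdsWithin_mono 0 (fun t ht => ne_of_gt ht))
  obtain ⟨δ1, hδ1, hIoo⟩ := mem_nhdsGT_iff_exists_Ioo_subset.1 hpos'
  obtain ⟨δ2, hδ2, hg2⟩ := Metric.eventually_nhds_iff.1 hg
  obtain ⟨δ3, hδ3, hm3⟩ := Metric.eventually_nhds_iff.1 hmax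
  set t0 : ℝ := min δ1 (min δ2 δ3) / 2 with ht0def
  have hδ1' : (0:ℝ) < δ1 := hδ1
  have ht0pos : 0 < t0 := by
    have : 0 < min δ1 (min δ2 δ3) := lt_min hδ1' (lt_min hδ2 hδ3)
    positivity
  have ht0lt1 : t0 < δ1 := by
    have h := min_le_left δ1 (min δ2 δ3)
    have : 0 < min δ1 (min δ2 δ3) := lt_min hδ1' (lt_min hδ2 hδ3)
    simp only [ht0def]
    linarith
  have ht0lt2 : t0 < δ2 := by
    have h := (min_le_right δ1 (min δ2 δ3)).trans (min_le_left δ2 δ3)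
    have : 0 < min δ1 (min δ2 δ3) := lt_min hδ1' (lt_min hδ2 hδ3)
    simp only [ht0def]
    linarith
  have ht0lt3 : t0 < δ3 := by
    have h := (min_le_right δ1 (min δ2 δ3)).trans (min_le_right δ2 δ3)
    have : 0 < min δ1 (min δ2 δ3) := lt_min hδ1' (lt_min hδ2 hδ3)
    simp only [ht0def]
    linarith
  have hmono : StrictMonoOn g (Set.Icc 0 t0) := by
    apply strictMonoOn_of_deriv_pos (convex_Icc 0 t0)
    · intro s hs
      have hd : dist s 0 < δ2 := by
        simp only [Real.dist_eq, sub_zero]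
        rw [abs_of_nonneg hs.1]
        linarith [hs.2]
      exact (hg2 hd).continuousAt.continuousWithinAt
    · intro s hs
      rw [interior_Icc] at hs
      have hd : dist s 0 < δ2 := by
        simp only [Real.dist_eq, sub_zero]
        rw [abs_of_nonneg hs.1.le]
        linarith [hs.2]
      rw [(hg2 hd).deriv]
      have hsl : 0 < slope g' 0 s := hIoo ⟨hs.1, hs.2.trans ht0lt1⟩
      rw [slope_def_field, h0, sub_zero, sub_zero] at hsl
      have := mul_pos hsl hs.1
      rwa [div_mul_cancel₀ _ (ne_of_gt hs.1)] at this
  have hlt : g 0 < g t0 :=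
    hmono ⟨le_refl 0, ht0pos.le⟩ ⟨ht0pos.le, le_refl t0⟩ ht0pos
  have hle : g t0 ≤ g 0 := by
    apply hm3 (y := t0)
    simp only [Real.dist_eq, sub_zero]
    rw [abs_of_nonneg ht0pos.le]
    exact ht0lt3
  linarith

/-- Second directional derivative is nonpositive at an interior local max. -/
lemma aux_dir_second_nonpos {m : ℕ} {f : EuclideanSpace ℝ (Fin m) → ℝ}
    {f' : EuclideanSpace ℝ (Fin m) → (EuclideanSpace ℝ (Fin m) →L[ℝ] ℝ)}
    {f'' : EuclideanSpace ℝ (Fin m) →L[ℝ] ℝ} {y0 e : EuclideanSpace ℝ (Fin m)}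
    (hf : ∀ᶠ y in 𝓝 y0, HasFDerivAt f (f' y) y)
    (hf'' : HasFDerivAt (fun z => f' z e) f'' y0)
    (hmax : IsLocalMax f y0) : f'' e ≤ 0 := by
  set γ : ℝ → EuclideanSpace ℝ (Fin m) := fun t => y0 + t • e with hγdef
  have hγ0 : γ 0 = y0 := by simp [hγdef]
  have hγd : ∀ t, HasDerivAt γ e t := by
    intro t
    have h1 : HasDerivAt (fun s : ℝ => s • e) ((1:ℝ) • e) t := (hasDerivAt_id t).smul_const e
    have h2 := h1.const_add y0
    simpa [hγdef] using h2
  have hγc : Continuous γ := continuous_const.add (continuous_id.smul continuous_const)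
  have hγt : Tendsto γ (𝓝 0) (𝓝 y0) := by
    rw [← hγ0]; exact hγc.continuousAt
  have hg : ∀ᶠ t in 𝓝 (0:ℝ), HasDerivAt (fun s => f (γ s)) (f' (γ t) e) t := by
    filter_upwards [hγt.eventually hf] with t ht
    exact ht.comp_hasDerivAt t (hγd t)
  have hg' : HasDerivAt (fun t => f' (γ t) e) (f'' e) 0 := by
    have hf''' : HasFDerivAt (fun z => f' z e) f'' (γ 0) := by rw [hγ0]; exact hf''
    exact hf'''.comp_hasDerivAt 0 (hγd 0)
  have hmax' : IsLocalMax (fun s => f (γ s)) 0 := by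
    have h := hγt.eventually hmax
    filter_upwards [h] with t ht
    simpa [hγ0] using ht
  exact aux_second_deriv_nonpos hg hg' hmax'

/-! ### Auxiliary lemmas: the radial comparison function -/

/-- `Qf x y = |y - x|²` in coordinates. -/
noncomputable def Qf {m : ℕ} (x y : EuclideanSpace ℝ (Fin m)) : ℝ :=
  ∑ i : Fin m, (y i - x i) ^ 2

/-- The derivative of `Qf x`. -/
noncomputable def dQf {m : ℕ} (x y : EuclideanSpace ℝ (Fin m)) :
    EuclideanSpace ℝ (Fin m) →L[ℝ] ℝ :=
  ∑ i : Fin m, (2 * (y i - x i)) • EuclideanSpace.proj i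

lemma hasFDerivAt_Qf {m : ℕ} (x y : EuclideanSpace ℝ (Fin m)) :
    HasFDerivAt (Qf x) (dQf x y) y := by
  have key : ∀ i : Fin m, HasFDerivAt (fun z : EuclideanSpace ℝ (Fin m) => (z i - x i) ^ 2)
      ((2 * (y i - x i)) • (EuclideanSpace.proj i : EuclideanSpace ℝ (Fin m) →L[ℝ] ℝ)) y := by
    intro i
    have h1 : HasFDerivAt (fun z : EuclideanSpace ℝ (Fin m) => z i - x i)
        (EuclideanSpace.proj i : EuclideanSpace ℝ (Fin m) →L[ℝ] ℝ) y := by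
      simpa using (EuclideanSpace.proj i : EuclideanSpace ℝ (Fin m) →L[ℝ] ℝ).hasFDerivAt.sub_const (x i)
    have h2 := h1.fun_mul h1
    have heq : (fun z : EuclideanSpace ℝ (Fin m) => (z i - x i) * (z i - x i))
        = fun z : EuclideanSpace ℝ (Fin m) => (z i - x i) ^ 2 := by
      funext z; ring
    rw [heq] at h2
    have e : ((2 * (y i - x i)) • (EuclideanSpace.proj i : EuclideanSpace ℝ (Fin m) →L[ℝ] ℝ))
        = (y i - x i) • EuclideanSpace.proj i + (y i - x i) • EuclideanSpace.proj i := by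
      rw [two_mul, add_smul]
    rw [e]; exact h2
  have := HasFDerivAt.fun_sum (u := Finset.univ) (fun i _ => key i)
  exact this

lemma dQf_single {m : ℕ} (x y : EuclideanSpace ℝ (Fin m)) (j : Fin m) :
    dQf x y (EuclideanSpace.single j 1) = 2 * (y j - x j) := by
  simp only [dQf, ContinuousLinearMap.coe_sum', Finset.sum_apply,
    ContinuousLinearMap.smul_apply, PiLp.proj_apply, smul_eq_mul]
  rw [Finset.sum_eq_single j]
  · simp [EuclideanSpace.single_apply]
  · intro i _ hij
    simp [EuclideanSpace.single_apply, hij]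
  · intro h; exact absurd (Finset.mem_univ j) h

lemma Qf_eq_norm {m : ℕ} (x y : EuclideanSpace ℝ (Fin m)) : Qf x y = ‖y - x‖ ^ 2 := by
  have h : ‖y - x‖ = Real.sqrt (∑ i : Fin m, (y i - x i) ^ 2) := by
    rw [EuclideanSpace.norm_eq]
    congr 1
    apply Finset.sum_congr rfl
    intro i _
    rw [Real.norm_eq_abs, sq_abs]
    congr 1
  rw [h, Real.sq_sqrt (Finset.sum_nonneg fun i _ => sq_nonneg _)]
  rfl

/-- Second derivative data for the comparison function direction `i`. -/
lemma hasFDerivAt_gD {m : ℕ} (x : EuclideanSpace ℝ (Fin m)) (r c : ℝ) (i : Fin m)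
    {y : EuclideanSpace ℝ (Fin m)} (hy : Qf x y < r ^ 2) :
    ∃ D : EuclideanSpace ℝ (Fin m) →L[ℝ] ℝ,
      HasFDerivAt (fun z => (c / (r ^ 2 - Qf x z)) * dQf x z (EuclideanSpace.single i 1)) D y ∧
      D (EuclideanSpace.single i 1)
        = 2 * c / (r ^ 2 - Qf x y) + 4 * c * (y i - x i) ^ 2 / (r ^ 2 - Qf x y) ^ 2 := by
  have hs : 0 < r ^ 2 - Qf x y := sub_pos.2 hy
  have hfun : (fun z => (c / (r ^ 2 - Qf x z)) * dQf x z (EuclideanSpace.single i 1))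
      = fun z : EuclideanSpace ℝ (Fin m) => (r ^ 2 - Qf x z)⁻¹ * (2 * c * (z i - x i)) := by
    funext z; rw [dQf_single]; ring
  have h1 : HasFDerivAt (fun z => r ^ 2 - Qf x z) (-dQf x y) y :=
    (hasFDerivAt_Qf x y).const_sub _
  have h2 : HasFDerivAt (fun z : EuclideanSpace ℝ (Fin m) => (r ^ 2 - Qf x z)⁻¹)
      ((-(( r ^ 2 - Qf x y) ^ 2)⁻¹) • (-dQf x y)) y :=
    (hasDerivAt_inv hs.ne').comp_hasFDerivAt y h1
  have h3 : HasFDerivAt (fun z : EuclideanSpace ℝ (Fin m) => z i - x i)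
      (EuclideanSpace.proj i : EuclideanSpace ℝ (Fin m) →L[ℝ] ℝ) y := by
    simpa using (EuclideanSpace.proj i : EuclideanSpace ℝ (Fin m) →L[ℝ] ℝ).hasFDerivAt.sub_const (x i)
  have h4 : HasFDerivAt (fun z : EuclideanSpace ℝ (Fin m) => 2 * c * (z i - x i))
      ((2 * c) • (EuclideanSpace.proj i : EuclideanSpace ℝ (Fin m) →L[ℝ] ℝ)) y := h3.const_mul (2 * c)
  have h5 := h2.mul h4
  refine ⟨_, by rw [hfun]; exact h5, ?_⟩
  have hproj : (EuclideanSpace.proj i : EuclideanSpace ℝ (Fin m) →L[ℝ] ℝ) (EuclideanSpace.single i 1) = 1 := by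
    simp [PiLp.proj_apply, EuclideanSpace.single_apply]
  simp only [ContinuousLinearMap.add_apply, ContinuousLinearMap.smul_apply,
    ContinuousLinearMap.neg_apply, dQf_single, hproj, smul_eq_mul]
  have hs' : (r ^ 2 - Qf x y) ≠ 0 := ne_of_gt hs
  field_simp [hs']
  ring

set_option maxHeartbeats 1000000 in
/-- Lemma 3.3 of Section 3 (local `C⁰`-estimate via Moser iteration): on a Euclidean ball
`B_τ(x₀)` where `−Λ ≤ S ≤ −ε₀`, any solution `u ≥ −A` of `−Δu + α = S e^{(2/n)u}` with
`α ∈ [α_*, 0]` satisfies `sup_{B_θ} (u + A) ≤ C · max{‖u + A‖_{L²(B_τ)}, 1}`. -/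
theorem local_C0_estimate
    (n : ℕ) (hn : 2 ≤ n) (m : ℕ) (hm : m = 2 * n)
    (x₀ : EuclideanSpace ℝ (Fin m)) (θ τ : ℝ) (hθ : 0 < θ) (hθτ : θ < τ)
    (ε0 Λ A αstar : ℝ) (hε0 : 0 < ε0) (hΛ : 0 < Λ) (hA : 0 < A) (hαstar : αstar < 0) :
    ∃ C > (0 : ℝ), ∀ α ∈ Set.Icc αstar 0,
      ∀ S : EuclideanSpace ℝ (Fin m) → ℝ, ContinuousOn S (Metric.ball x₀ τ) →
        (∀ x ∈ Metric.ball x₀ τ, -Λ ≤ S x ∧ S x ≤ -ε0) →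
      ∀ u : EuclideanSpace ℝ (Fin m) → ℝ, ContDiffOn ℝ 2 u (Metric.ball x₀ τ) →
        (∀ x ∈ Metric.ball x₀ τ, -A ≤ u x) →
        (∀ x ∈ Metric.ball x₀ τ, -lapl u x + α = S x * Real.exp ((2 / (n : ℝ)) * u x)) →
        ∀ x ∈ Metric.ball x₀ θ,
          u x + A ≤ C * max (Real.sqrt (∫ y in Metric.ball x₀ τ, (u y + A) ^ 2)) 1 := by
  have hτθ : 0 < τ - θ := sub_pos.2 hθτ
  set r : ℝ := (τ - θ) / 2 with hrdef
  have hr : 0 < r := by positivity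
  have hcpos : (0:ℝ) < (n:ℝ) := by
    have h2 : (2:ℝ) ≤ (n:ℝ) := by exact_mod_cast hn
    linarith
  have hC0 : (0:ℝ) < -αstar := by linarith
  set K : ℝ := 2 * (n:ℝ) * (m:ℝ) * r ^ 2 + 4 * (n:ℝ) * r ^ 2 with hKdef
  have hK : 0 < K := by
    have h1 : (0:ℝ) ≤ 2 * (n:ℝ) * (m:ℝ) * r ^ 2 := by positivity
    have h2 : (0:ℝ) < 4 * (n:ℝ) * r ^ 2 := by positivity
    rw [hKdef]; linarith
  set X : ℝ := (K + (-αstar) * r ^ 4) / ε0 with hXdef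
  have hX : 0 < X := by
    have h1 : (0:ℝ) < (-αstar) * r ^ 4 := by positivity
    rw [hXdef]
    exact div_pos (by linarith) hε0
  set b : ℝ := ((n:ℝ) / 2) * Real.log X with hbdef
  have hexpb : Real.exp ((2 / (n:ℝ)) * b) = X := by
    rw [hbdef, show (2 / (n:ℝ)) * (((n:ℝ) / 2) * Real.log X) = Real.log X by
      field_simp]
    exact Real.exp_log hX
  refine ⟨max (b - (n:ℝ) * Real.log (r ^ 2) + A) 1,
    lt_of_lt_of_le one_pos (le_max_right _ _), ?_⟩
  intro α hα S hScont hS u hu hulb hPDE x hx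
  suffices hux : u x ≤ b - (n:ℝ) * Real.log (r ^ 2) by
    have h1 : (1:ℝ) ≤ max (Real.sqrt (∫ y in Metric.ball x₀ τ, (u y + A) ^ 2)) 1 :=
      le_max_right _ _
    have h2 : (0:ℝ) ≤ max (b - (n:ℝ) * Real.log (r ^ 2) + A) 1 :=
      le_trans zero_le_one (le_max_right _ _)
    calc u x + A ≤ max (b - (n:ℝ) * Real.log (r ^ 2) + A) 1 :=
          le_trans (by linarith) (le_max_left _ _)
      _ = max (b - (n:ℝ) * Real.log (r ^ 2) + A) 1 * 1 := (mul_one _).symm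
      _ ≤ max (b - (n:ℝ) * Real.log (r ^ 2) + A) 1
            * max (Real.sqrt (∫ y in Metric.ball x₀ τ, (u y + A) ^ 2)) 1 :=
          mul_le_mul_of_nonneg_left h1 h2
  -- geometric setup
  have hxball : x ∈ Metric.ball x₀ τ := Metric.mem_ball.2 (lt_trans (Metric.mem_ball.1 hx) hθτ)
  have hsub : Metric.closedBall x r ⊆ Metric.ball x₀ τ := by
    intro y hy
    have h1 : dist y x ≤ r := Metric.mem_closedBall.1 hy
    have h2 : dist x x₀ < θ := Metric.mem_ball.1 hx
    have h3 := dist_triangle y x x₀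
    have h4 : r = (τ - θ) / 2 := hrdef
    exact Metric.mem_ball.2 (by linarith)
  -- the comparison function
  set v : EuclideanSpace ℝ (Fin m) → ℝ :=
    fun y => b - (n:ℝ) * Real.log (r ^ 2 - Qf x y) with hvdef
  set dV : EuclideanSpace ℝ (Fin m) → (EuclideanSpace ℝ (Fin m) →L[ℝ] ℝ) :=
    fun y => ((n:ℝ) / (r ^ 2 - Qf x y)) • dQf x y with hdVdef
  have hv_deriv : ∀ y, Qf x y < r ^ 2 → HasFDerivAt v (dV y) y := by
    intro y hy
    have hs : 0 < r ^ 2 - Qf x y := sub_pos.2 hy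
    have h1 : HasFDerivAt (fun z => r ^ 2 - Qf x z) (-dQf x y) y :=
      (hasFDerivAt_Qf x y).const_sub _
    have h2 := (h1.log hs.ne').const_mul (n:ℝ)
    have h3 := h2.const_sub b
    have e : dV y = -((n:ℝ) • (r ^ 2 - Qf x y)⁻¹ • -dQf x y) := by
      simp only [hdVdef, smul_neg, neg_neg, smul_smul, div_eq_mul_inv]
    rw [e]; exact h3
  have hQ0 : Qf x x = 0 := by simp [Qf]
  have hQd : ∀ y : EuclideanSpace ℝ (Fin m), Qf x y = dist y x ^ 2 := by
    intro y; rw [dist_eq_norm, Qf_eq_norm]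
  have hQnonneg : ∀ y, 0 ≤ Qf x y := fun y => by rw [hQd]; positivity
  -- upper bound of u on the closed ball
  have hcont_u : ContinuousOn u (Metric.closedBall x r) := (hu.continuousOn).mono hsub
  obtain ⟨z, hz, hzmax⟩ := (isCompact_closedBall x r).exists_isMaxOn
      ⟨x, Metric.mem_closedBall_self hr.le⟩ hcont_u
  set M := u z with hMdef
  have hM : ∀ y ∈ Metric.closedBall x r, u y ≤ M := fun y hy => hzmax hy
  -- choice of the radius of the inner ball
  set δ : ℝ := min (Real.exp ((u x - M + (n:ℝ) * Real.log (r ^ 2)) / (n:ℝ)) / 2) (r ^ 2 / 2)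
    with hδdef
  have hδpos : 0 < δ := lt_min (by positivity) (by positivity)
  have hδle : δ ≤ r ^ 2 / 2 := min_le_right _ _
  have hδlog : (n:ℝ) * Real.log δ < u x - M + (n:ℝ) * Real.log (r ^ 2) := by
    have h1 : Real.log δ
        ≤ Real.log (Real.exp ((u x - M + (n:ℝ) * Real.log (r ^ 2)) / (n:ℝ)) / 2) :=
      Real.log_le_log hδpos (min_le_left _ _)
    rw [Real.log_div (Real.exp_ne_zero _) two_ne_zero, Real.log_exp] at h1
    have h2 : 0 < Real.log 2 := Real.log_pos one_lt_two
    have h3 := mul_le_mul_of_nonneg_left h1 hcpos.le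
    rw [mul_sub, mul_div_cancel₀ _ hcpos.ne'] at h3
    linarith [mul_pos hcpos h2]
  set tt : ℝ := r ^ 2 - δ with httdef
  have hr2 : 0 < r ^ 2 := by positivity
  have htt0 : 0 < tt := by rw [httdef]; linarith
  have httr : tt < r ^ 2 := by rw [httdef]; linarith
  set ρ : ℝ := Real.sqrt tt with hρdef
  have hρpos : 0 < ρ := Real.sqrt_pos.2 htt0
  have hρr : ρ < r := by
    rw [hρdef, show r = Real.sqrt (r ^ 2) by rw [Real.sqrt_sq hr.le]]
    exact Real.sqrt_lt_sqrt htt0.le httr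
  have hρsq : ρ ^ 2 = tt := Real.sq_sqrt htt0.le
  have hsub2 : Metric.closedBall x ρ ⊆ Metric.closedBall x r :=
    Metric.closedBall_subset_closedBall hρr.le
  have hQU : ∀ y ∈ Metric.closedBall x ρ, Qf x y ≤ tt := by
    intro y hy
    rw [hQd]
    calc dist y x ^ 2 ≤ ρ ^ 2 :=
          pow_le_pow_left₀ dist_nonneg (Metric.mem_closedBall.1 hy) 2
      _ = tt := hρsq
  -- the function u - v and its interior maximum
  set w : EuclideanSpace ℝ (Fin m) → ℝ := fun y => u y - v y with hwdef
  have hw_cont : ContinuousOn w (Metric.closedBall x ρ) := by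
    apply ContinuousOn.sub (hcont_u.mono hsub2)
    intro y hy
    exact ((hv_deriv y (lt_of_le_of_lt (hQU y hy) httr)).differentiableAt.continuousAt).continuousWithinAt
  obtain ⟨y0, hy0mem, hy0max⟩ := (isCompact_closedBall x ρ).exists_isMaxOn
      ⟨x, Metric.mem_closedBall_self hρpos.le⟩ hw_cont
  have hwy0 : ∀ y ∈ Metric.closedBall x ρ, w y ≤ w y0 := fun y hy => hy0max hy
  have hy0r : y0 ∈ Metric.closedBall x r := hsub2 hy0mem
  have hy0ball : y0 ∈ Metric.ball x₀ τ := hsub hy0r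
  have hy0U : Qf x y0 < r ^ 2 := lt_of_le_of_lt (hQU y0 hy0mem) httr
  have hy0lt : dist y0 x < ρ := by
    by_contra hcon
    push_neg at hcon
    have heq : dist y0 x = ρ := le_antisymm (Metric.mem_closedBall.1 hy0mem) hcon
    have hQy0 : Qf x y0 = tt := by rw [hQd, heq, hρsq]
    have h1 : w x ≤ w y0 := hwy0 x (Metric.mem_closedBall_self hρpos.le)
    have hwx : w x = u x - b + (n:ℝ) * Real.log (r ^ 2) := by
      simp only [hwdef, hvdef, hQ0, sub_zero]
      ring
    have hwy0' : w y0 = u y0 - b + (n:ℝ) * Real.log δ := by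
      simp only [hwdef, hvdef, hQy0, httdef]
      rw [show r ^ 2 - (r ^ 2 - δ) = δ by ring]
      ring
    have hub : u y0 ≤ M := hM y0 hy0r
    rw [hwx, hwy0'] at h1
    linarith
  have hlocmax : IsLocalMax w y0 := by
    apply hy0max.isLocalMax
    exact Filter.mem_of_superset (Metric.isOpen_ball.mem_nhds (Metric.mem_ball.2 hy0lt))
      Metric.ball_subset_closedBall
  -- derivative facts
  have hQdiff : Differentiable ℝ (Qf x) := fun y => (hasFDerivAt_Qf x y).differentiableAt
  have hQcont : Continuous (Qf x) := hQdiff.continuous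
  have hopen : IsOpen {y : EuclideanSpace ℝ (Fin m) | Qf x y < r ^ 2} :=
    isOpen_lt hQcont continuous_const
  have hnbhd : (Metric.ball x₀ τ ∩ {y : EuclideanSpace ℝ (Fin m) | Qf x y < r ^ 2}) ∈ 𝓝 y0 :=
    (Metric.isOpen_ball.inter hopen).mem_nhds ⟨hy0ball, hy0U⟩
  have hw' : ∀ᶠ y in 𝓝 y0, HasFDerivAt w (fderiv ℝ u y - dV y) y := by
    filter_upwards [hnbhd] with y hy
    have hud : DifferentiableAt ℝ u y :=
      (hu.contDiffAt (Metric.isOpen_ball.mem_nhds hy.1)).differentiableAt (by norm_num)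
    exact hud.hasFDerivAt.sub (hv_deriv y hy.2)
  have hu2 : ContDiffAt ℝ 2 u y0 := hu.contDiffAt (Metric.isOpen_ball.mem_nhds hy0ball)
  have hfd : DifferentiableAt ℝ (fderiv ℝ u) y0 :=
    (hu2.fderiv_right (m := 1) (by norm_num)).differentiableAt (by norm_num)
  have hkey : ∀ i : Fin m,
      fderiv ℝ (fun y => fderiv ℝ u y (EuclideanSpace.single i 1)) y0 (EuclideanSpace.single i 1)
        ≤ 2 * (n:ℝ) / (r ^ 2 - Qf x y0)
          + 4 * (n:ℝ) * (y0 i - x i) ^ 2 / (r ^ 2 - Qf x y0) ^ 2 := by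
    intro i
    obtain ⟨D, hD, hDval⟩ := hasFDerivAt_gD x r (n:ℝ) i hy0U
    have happ : DifferentiableAt ℝ (fun y => fderiv ℝ u y (EuclideanSpace.single i 1)) y0 :=
      (ContinuousLinearMap.apply ℝ ℝ
        (EuclideanSpace.single i 1 : EuclideanSpace ℝ (Fin m))).differentiableAt.comp y0 hfd
    have hU : HasFDerivAt (fun y => fderiv ℝ u y (EuclideanSpace.single i 1))
        (fderiv ℝ (fun y => fderiv ℝ u y (EuclideanSpace.single i 1)) y0) y0 :=
      happ.hasFDerivAt
    have hD' : HasFDerivAt (fun z => dV z (EuclideanSpace.single i 1)) D y0 := by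
      have heq2 : (fun z => dV z (EuclideanSpace.single i 1))
          = fun z => ((n:ℝ) / (r ^ 2 - Qf x z)) * dQf x z (EuclideanSpace.single i 1) := by
        funext z
        simp [hdVdef]
      rw [heq2]; exact hD
    have hsubD := hU.fun_sub hD'
    have hw'' : HasFDerivAt (fun z => (fderiv ℝ u z - dV z) (EuclideanSpace.single i 1))
        ((fderiv ℝ (fun y => fderiv ℝ u y (EuclideanSpace.single i 1)) y0) - D) y0 := by
      simpa using hsubD
    have hneg := aux_dir_second_nonpos hw' hw'' hlocmax
    rw [ContinuousLinearMap.sub_apply, sub_nonpos, hDval] at hneg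
    exact hneg
  -- sum the directional second derivatives
  set s0 : ℝ := r ^ 2 - Qf x y0 with hs0def
  have hs0 : 0 < s0 := sub_pos.2 hy0U
  have hs0r : s0 ≤ r ^ 2 := by
    have := hQnonneg y0
    rw [hs0def]; linarith
  have hlapl : lapl u y0 ≤ 2 * (n:ℝ) * (m:ℝ) / s0 + 4 * (n:ℝ) * Qf x y0 / s0 ^ 2 := by
    unfold lapl
    calc (∑ i : Fin m, fderiv ℝ (fun y => fderiv ℝ u y (EuclideanSpace.single i 1)) y0
            (EuclideanSpace.single i 1))
        ≤ ∑ i : Fin m,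
            (2 * (n:ℝ) / s0 + 4 * (n:ℝ) * (y0 i - x i) ^ 2 / s0 ^ 2) :=
          Finset.sum_le_sum fun i _ => hkey i
      _ = 2 * (n:ℝ) * (m:ℝ) / s0 + 4 * (n:ℝ) * Qf x y0 / s0 ^ 2 := by
          rw [Finset.sum_add_distrib, Finset.sum_const, Finset.card_univ, Fintype.card_fin,
            nsmul_eq_mul]
          congr 1
          · ring
          · rw [← Finset.sum_div, ← Finset.mul_sum]
            congr 2
  have hupper : lapl u y0 ≤ K / s0 ^ 2 := by
    have e1 : 2 * (n:ℝ) * (m:ℝ) / s0 + 4 * (n:ℝ) * Qf x y0 / s0 ^ 2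
        = (2 * (n:ℝ) * (m:ℝ) * s0 + 4 * (n:ℝ) * Qf x y0) / s0 ^ 2 := by
      field_simp
    have e2 : 2 * (n:ℝ) * (m:ℝ) * s0 + 4 * (n:ℝ) * Qf x y0 ≤ K := by
      rw [hKdef]
      have h1 : 2 * (n:ℝ) * (m:ℝ) * s0 ≤ 2 * (n:ℝ) * (m:ℝ) * r ^ 2 :=
        mul_le_mul_of_nonneg_left hs0r (by positivity)
      have h2 : 4 * (n:ℝ) * Qf x y0 ≤ 4 * (n:ℝ) * r ^ 2 :=
        mul_le_mul_of_nonneg_left hy0U.le (by positivity)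
      linarith
    calc lapl u y0 ≤ _ := hlapl
      _ = _ := e1
      _ ≤ K / s0 ^ 2 := by gcongr
  -- the differential inequality at the max point
  have hPDE0 := hPDE y0 hy0ball
  have hSy0 := (hS y0 hy0ball).2
  have hexp_pos := Real.exp_pos ((2 / (n:ℝ)) * u y0)
  have hlower : αstar + ε0 * Real.exp ((2 / (n:ℝ)) * u y0) ≤ lapl u y0 := by
    have hval : lapl u y0 = α - S y0 * Real.exp ((2 / (n:ℝ)) * u y0) := by linarith
    rw [hval]
    have hmul : ε0 * Real.exp ((2 / (n:ℝ)) * u y0)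
        ≤ (-S y0) * Real.exp ((2 / (n:ℝ)) * u y0) :=
      mul_le_mul_of_nonneg_right (by linarith) hexp_pos.le
    have hα1 := hα.1
    linarith
  -- compare exp values
  have hs4 : s0 ^ 2 ≤ r ^ 4 := by
    calc s0 ^ 2 ≤ (r ^ 2) ^ 2 := pow_le_pow_left₀ hs0.le hs0r 2
      _ = r ^ 4 := by ring
  have hC0div : (-αstar) ≤ (-αstar) * r ^ 4 / s0 ^ 2 := by
    rw [le_div_iff₀ (pow_pos hs0 2)]
    exact mul_le_mul_of_nonneg_left hs4 hC0.le
  have hεX : ε0 * X = K + (-αstar) * r ^ 4 := by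
    rw [hXdef]
    field_simp [hε0.ne']
  have hvy0 : v y0 = b - (n:ℝ) * Real.log s0 := by
    simp only [hvdef, hs0def]
  have hexpv : Real.exp ((2 / (n:ℝ)) * v y0) = X / s0 ^ 2 := by
    have h2n : (2 / (n:ℝ)) * ((n:ℝ) * Real.log s0) = 2 * Real.log s0 := by
      field_simp
    have harg : (2 / (n:ℝ)) * v y0 = (2 / (n:ℝ)) * b - 2 * Real.log s0 := by
      rw [hvy0, mul_sub, h2n]
    rw [harg, Real.exp_sub, hexpb]
    congr 1
    rw [show (2:ℝ) * Real.log s0 = Real.log s0 + Real.log s0 by ring, Real.exp_add,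
      Real.exp_log hs0, sq]
  have hEu : ε0 * Real.exp ((2 / (n:ℝ)) * u y0) ≤ ε0 * Real.exp ((2 / (n:ℝ)) * v y0) := by
    have hsplit : (K + (-αstar) * r ^ 4) / s0 ^ 2
        = K / s0 ^ 2 + (-αstar) * r ^ 4 / s0 ^ 2 := add_div _ _ _
    have hchain : ε0 * Real.exp ((2 / (n:ℝ)) * u y0) ≤ (K + (-αstar) * r ^ 4) / s0 ^ 2 := by
      rw [hsplit]
      linarith
    rw [hexpv, ← mul_div_assoc, hεX]
    exact hchain
  have huv : u y0 ≤ v y0 := by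
    have h1 : Real.exp ((2 / (n:ℝ)) * u y0) ≤ Real.exp ((2 / (n:ℝ)) * v y0) :=
      le_of_mul_le_mul_left hEu hε0
    have h2 := Real.exp_le_exp.1 h1
    have h3 : 0 < 2 / (n:ℝ) := by positivity
    exact le_of_mul_le_mul_left h2 h3
  -- conclude
  have hwx : w x ≤ w y0 := hwy0 x (Metric.mem_closedBall_self hρpos.le)
  have hwle : u x - v x ≤ u y0 - v y0 := hwx
  have hvx : v x = b - (n:ℝ) * Real.log (r ^ 2) := by
    simp only [hvdef, hQ0, sub_zero]
  linarith
end

section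
/- Let n ≥ 1 be an integer, m = 2n, α ∈ ℝ, and S : ℝ^m → ℝ a continuous ℤ^m-periodic function. Let u be a smooth ℤ^m-periodic function satisfying −Δu + α = S·e^{(2/n)u} on ℝ^m and the stability inequality ∫_{[0,1]^m} |∇φ|² dx − (2/n)∫_{[0,1]^m} S·e^{(2/n)u}·φ² dx ≥ 0 with the test function φ = e^{u/n}. Then (3/(2n)) ∫_{[0,1]^m} |∇u|²·e^{(2/n)u} dx ≤ −α ∫_{[0,1]^m} e^{(2/n)u} dx. -/
open MeasureTheory Real

lemma fderiv_zperiodic {m : ℕ} {g : EuclideanSpace ℝ (Fin m) → ℝ}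
    (hg : Differentiable ℝ g) (hper : ZPeriodic g) (k : Fin m → ℤ)
    (x : EuclideanSpace ℝ (Fin m)) :
    fderiv ℝ g (x + (WithLp.equiv 2 (Fin m → ℝ)).symm (fun i => (k i : ℝ))) = fderiv ℝ g x := by
  set c := (WithLp.equiv 2 (Fin m → ℝ)).symm (fun i => (k i : ℝ))
  have h1 : HasFDerivAt (fun y : EuclideanSpace ℝ (Fin m) => y + c)
      (ContinuousLinearMap.id ℝ _) x := (hasFDerivAt_id x).add_const c
  have h2 := ((hg (x + c)).hasFDerivAt.comp x h1)
  rw [Function.comp_def] at h2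
  have h3 : (fun y => g (y + c)) = g := funext fun y => hper k y
  rw [h3] at h2
  have h4 := h2.fderiv
  rw [ContinuousLinearMap.comp_id] at h4
  exact h4.symm

lemma div_int_zero {m : ℕ} (hm : 0 < m) (f : Fin m → EuclideanSpace ℝ (Fin m) → ℝ)
    (hfd : ∀ i, Differentiable ℝ (f i))
    (hfc : Continuous fun x => ∑ i, fderiv ℝ (f i) x (EuclideanSpace.single i 1))
    (hper : ∀ i, ZPeriodic (f i)) :
    ∫ x in unitCell m, ∑ i, fderiv ℝ (f i) x (EuclideanSpace.single i 1) = 0 := by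
  obtain ⟨k, rfl⟩ : ∃ k, m = k + 1 := ⟨m - 1, (Nat.succ_pred_eq_of_pos hm).symm⟩
  set L : (Fin (k+1) → ℝ) ≃L[ℝ] EuclideanSpace ℝ (Fin (k+1)) :=
    (PiLp.continuousLinearEquiv 2 ℝ (fun _ : Fin (k+1) => ℝ)).symm with hL
  set eqv := (MeasurableEquiv.toLp 2 (Fin (k+1) → ℝ)).symm with heqv
  have hdiv := MeasureTheory.integral_divergence_of_hasFDerivAt_off_countable'
    (0 : Fin (k+1) → ℝ) 1 (by intro i; norm_num)
    (fun i y => f i (L y))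
    (fun i y => (fderiv ℝ (f i) (L y)).comp (L : (Fin (k+1) → ℝ) →L[ℝ] _))
    ∅ Set.countable_empty
    (fun i => ((hfd i).continuous.comp L.continuous).continuousOn)
    (fun y _ i => ((hfd i (L y)).hasFDerivAt.comp y L.hasFDerivAt))
    ?_
  · -- faces cancel
    have hface : ∀ (i : Fin (k+1)) (y : Fin k → ℝ),
        f i (L (i.insertNth ((1 : Fin (k+1) → ℝ) i) y))
          = f i (L (i.insertNth ((0 : Fin (k+1) → ℝ) i) y)) := by
      intro i y
      have hins : (i.insertNth ((1 : Fin (k+1) → ℝ) i) y : Fin (k+1) → ℝ)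
          = i.insertNth ((0 : Fin (k+1) → ℝ) i) y + Pi.single i 1 := by
        funext j
        refine Fin.succAboveCases i ?_ ?_ j
        · simp
        · intro p
          simp [Fin.insertNth_apply_succAbove, Pi.single_eq_of_ne (Fin.succAbove_ne i p)]
      have hk : (fun j : Fin (k+1) => (((if j = i then 1 else 0 : ℤ)) : ℝ))
          = Pi.single i 1 := by
        funext j; by_cases h : j = i <;> simp [h, Pi.single_apply]
      have hp := hper i (fun j => if j = i then 1 else 0)
        (L (i.insertNth ((0 : Fin (k+1) → ℝ) i) y))
      rw [hk] at hp
      rw [hins, map_add]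
      convert hp using 3
      rfl
    have hMP := EuclideanSpace.volume_preserving_symm_measurableEquiv_toLp (Fin (k+1))
    have he : MeasurableEmbedding eqv := eqv.measurableEmbedding
    have hpre : eqv ⁻¹' (Set.Icc 0 1) = unitCell (k+1) := by
      ext x
      simp only [Set.mem_preimage, Set.mem_Icc, Pi.le_def, unitCell, Set.mem_setOf_eq,
        forall_and]
      rfl
    have htr := hMP.setIntegral_preimage_emb he
      (fun y => ∑ i, ((fderiv ℝ (f i) (L y)).comp (L : (Fin (k+1) → ℝ) →L[ℝ] _))
        (Pi.single i 1)) (Set.Icc 0 1)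
    rw [hpre] at htr
    have hid : (fun x : EuclideanSpace ℝ (Fin (k+1)) =>
        ∑ i, ((fderiv ℝ (f i) (L (eqv x))).comp (L : (Fin (k+1) → ℝ) →L[ℝ] _))
          (Pi.single i 1))
        = fun x => ∑ i, fderiv ℝ (f i) x (EuclideanSpace.single i 1) := rfl
    rw [hid] at htr
    rw [htr, hdiv, Finset.sum_eq_zero]
    intro i _
    rw [sub_eq_zero]
    exact setIntegral_congr_fun measurableSet_Icc (fun y _ => (hface i y))
  · -- integrability
    have hcont : Continuous fun y : Fin (k+1) → ℝ =>
        ∑ i, ((fderiv ℝ (f i) (L y)).comp (L : (Fin (k+1) → ℝ) →L[ℝ] _)) (Pi.single i 1) := by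
      have : (fun y : Fin (k+1) → ℝ =>
          ∑ i, ((fderiv ℝ (f i) (L y)).comp (L : (Fin (k+1) → ℝ) →L[ℝ] _)) (Pi.single i 1))
          = (fun x => ∑ i, fderiv ℝ (f i) x (EuclideanSpace.single i 1)) ∘ L := rfl
      rw [this]
      exact hfc.comp L.continuous
    exact hcont.integrableOn_Icc

/-- The key inequality in the proof of Lemma 3.5: if `u` is a smooth periodic solution of
`−Δu + α = S e^{(2/n)u}` satisfying the second-variation inequality with test function
`φ = e^{u/n}`, then `(3/(2n)) ∫ |∇u|² e^{(2/n)u} ≤ −α ∫ e^{(2/n)u}`. -/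
theorem key_energy_inequality
    (n : ℕ) (hn : 1 ≤ n) (m : ℕ) (hm : m = 2 * n) (α : ℝ)
    (S : EuclideanSpace ℝ (Fin m) → ℝ) (hS : Continuous S) (hSper : ZPeriodic S)
    (u : EuclideanSpace ℝ (Fin m) → ℝ) (hu : ContDiff ℝ (⊤ : ℕ∞) u) (huper : ZPeriodic u)
    (hueq : ∀ x, -lapl u x + α = S x * Real.exp ((2 / (n : ℝ)) * u x))
    (hstab : 0 ≤ (∫ x in unitCell m, gradSq (fun y => Real.exp (u y / (n : ℝ))) x) -
      (2 / (n : ℝ)) * ∫ x in unitCell m,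
        S x * Real.exp ((2 / (n : ℝ)) * u x) * (Real.exp (u x / (n : ℝ))) ^ 2) :
    (3 / (2 * (n : ℝ))) * ∫ x in unitCell m, gradSq u x * Real.exp ((2 / (n : ℝ)) * u x) ≤
      -α * ∫ x in unitCell m, Real.exp ((2 / (n : ℝ)) * u x) := by
  set N : ℝ := (n : ℝ) with hNdef
  have h1N : (1 : ℝ) ≤ N := by rw [hNdef]; exact_mod_cast hn
  have hN : (0 : ℝ) < N := by linarith
  set c : ℝ := 2 / N with hcdef
  set w : EuclideanSpace ℝ (Fin m) → ℝ := fun x => Real.exp (c * u x) with hwdef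
  have hud : Differentiable ℝ u := hu.differentiable (by simp)
  set g : Fin m → EuclideanSpace ℝ (Fin m) → ℝ :=
    fun i y => fderiv ℝ u y (EuclideanSpace.single i 1) with hgdef
  have hgi : ∀ i, ContDiff ℝ (⊤ : ℕ∞) (g i) := by
    intro i
    have h1 : ContDiff ℝ (⊤ : ℕ∞) (fderiv ℝ u) := hu.fderiv_right (by simp)
    exact (ContinuousLinearMap.apply ℝ ℝ (EuclideanSpace.single i 1)).contDiff.comp h1
  have hgic : ∀ i, Continuous (g i) := fun i => (hgi i).continuous
  have hwc : Continuous w := (Real.continuous_exp.comp (continuous_const.mul hu.continuous))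
  have hwper : ZPeriodic w := fun k x => by
    show Real.exp (c * u _) = Real.exp (c * u x); rw [huper k x]
  have hgper : ∀ i, ZPeriodic (g i) := fun i k x => by
    simp only [hgdef]; rw [fderiv_zperiodic hud huper k x]
  have hw' : ∀ x, HasFDerivAt w (Real.exp (c * u x) • (c • fderiv ℝ u x)) x := fun x =>
    ((hud x).hasFDerivAt.const_mul c).exp
  set f : Fin m → EuclideanSpace ℝ (Fin m) → ℝ := fun i x => w x * g i x with hfdef
  have hf' : ∀ i x, HasFDerivAt (f i)
      (w x • fderiv ℝ (g i) x + g i x • (Real.exp (c * u x) • (c • fderiv ℝ u x))) x :=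
    fun i x => (hw' x).mul ((hgi i).differentiable (by simp) x).hasFDerivAt
  have hfd : ∀ i, Differentiable ℝ (f i) := fun i x => (hf' i x).differentiableAt
  have hfper : ∀ i, ZPeriodic (f i) := fun i k x => by
    simp only [hfdef]; rw [hwper k x, hgper i k x]
  have hlaplc : Continuous (lapl u) := by
    unfold lapl
    exact continuous_finset_sum _ fun i _ =>
      (ContinuousLinearMap.apply ℝ ℝ (EuclideanSpace.single i 1)).continuous.comp
        ((hgi i).continuous_fderiv (by simp))
  have hgradc : Continuous (gradSq u) := by
    unfold gradSq
    exact continuous_finset_sum _ fun i _ => (hgic i).pow 2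
  have hDiv : ∀ x, (∑ i, fderiv ℝ (f i) x (EuclideanSpace.single i 1))
      = w x * lapl u x + c * (gradSq u x * w x) := by
    intro x
    have hterm : ∀ i, fderiv ℝ (f i) x (EuclideanSpace.single i 1)
        = w x * fderiv ℝ (g i) x (EuclideanSpace.single i 1) + c * ((g i x) ^ 2 * w x) := by
      intro i
      rw [(hf' i x).fderiv]
      simp only [ContinuousLinearMap.add_apply, ContinuousLinearMap.smul_apply, smul_eq_mul]
      have : fderiv ℝ u x (EuclideanSpace.single i 1) = g i x := rfl
      rw [this]
      ring
    rw [Finset.sum_congr rfl (fun i _ => hterm i), Finset.sum_add_distrib,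
      ← Finset.mul_sum, ← Finset.mul_sum]
    have h1 : (∑ i, fderiv ℝ (g i) x (EuclideanSpace.single i 1)) = lapl u x := rfl
    have h2 : (∑ i, (g i x) ^ 2 * w x) = gradSq u x * w x := by
      rw [← Finset.sum_mul]; rfl
    rw [h1, h2]
  have hfc : Continuous fun x => ∑ i, fderiv ℝ (f i) x (EuclideanSpace.single i 1) := by
    have heq : (fun x => ∑ i, fderiv ℝ (f i) x (EuclideanSpace.single i 1))
        = fun x => w x * lapl u x + c * (gradSq u x * w x) := funext hDiv
    rw [heq]
    exact (hwc.mul hlaplc).add (continuous_const.mul (hgradc.mul hwc))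
  have hIBPraw := div_int_zero (show 0 < m by omega) f hfd hfc hfper
  have hIBP : (∫ x in unitCell m, (w x * lapl u x + c * (gradSq u x * w x))) = 0 := by
    rw [← hIBPraw]
    exact integral_congr_ae (Filter.Eventually.of_forall fun x => (hDiv x).symm)
  have hcell : unitCell m
      = (PiLp.continuousLinearEquiv 2 ℝ (fun _ : Fin m => ℝ)).toHomeomorph ⁻¹'
        (Set.Icc 0 1) := by
    ext x
    simp only [unitCell, Set.mem_setOf_eq, Set.mem_preimage, Set.mem_Icc, Pi.le_def,
      forall_and]
    rfl
  have hcompact : IsCompact (unitCell m) := by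
    rw [hcell]
    exact (Homeomorph.isCompact_preimage _).mpr isCompact_Icc
  have hmeas : MeasurableSet (unitCell m) := hcompact.isClosed.measurableSet
  have hint1 : IntegrableOn (fun x => w x * lapl u x) (unitCell m) :=
    ((hwc.mul hlaplc).continuousOn).integrableOn_compact hcompact
  have hint2 : IntegrableOn (fun x => gradSq u x * w x) (unitCell m) :=
    ((hgradc.mul hwc).continuousOn).integrableOn_compact hcompact
  have hintw : IntegrableOn w (unitCell m) := (hwc.continuousOn).integrableOn_compact hcompact
  set G : ℝ := ∫ x in unitCell m, gradSq u x * w x with hGdef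
  set E' : ℝ := ∫ x in unitCell m, w x with hE'def
  have hIBP2 : (∫ x in unitCell m, w x * lapl u x) = -(c * G) := by
    have hsplit : (∫ x in unitCell m, (w x * lapl u x + c * (gradSq u x * w x)))
        = (∫ x in unitCell m, w x * lapl u x) + c * G := by
      rw [integral_add hint1 (hint2.const_mul c), integral_const_mul, hGdef]
    rw [hsplit] at hIBP
    linarith
  have hBpt : ∀ x, S x * Real.exp (c * u x) * (Real.exp (u x / N)) ^ 2
      = α * w x - w x * lapl u x := by
    intro x
    have hsq : (Real.exp (u x / N)) ^ 2 = Real.exp (c * u x) := by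
      rw [sq, ← Real.exp_add, hcdef, ← add_div, div_mul_eq_mul_div, two_mul]
    have he := (hueq x).symm
    calc S x * Real.exp (c * u x) * (Real.exp (u x / N)) ^ 2
        = (S x * Real.exp (c * u x)) * Real.exp (c * u x) := by rw [hsq]
      _ = (-lapl u x + α) * w x := by rw [he]
      _ = α * w x - w x * lapl u x := by ring
  have hBeq : (∫ x in unitCell m, S x * Real.exp (c * u x) * (Real.exp (u x / N)) ^ 2)
      = c * G + α * E' := by
    rw [setIntegral_congr_fun hmeas (fun x _ => hBpt x)]
    rw [integral_sub (hintw.const_mul α) hint1]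
    rw [integral_const_mul, hIBP2]
    ring
  have hApt : ∀ x, gradSq (fun y => Real.exp (u y / N)) x = (gradSq u x * w x) / N ^ 2 := by
    intro x
    have hv' : HasFDerivAt (fun y => Real.exp (u y / N))
        (Real.exp (u x / N) • ((1 / N) • fderiv ℝ u x)) x := by
      have h0 : HasFDerivAt (fun y => u y / N) ((1 / N) • fderiv ℝ u x) x := by
        have h00 := (hud x).hasFDerivAt.const_mul (1 / N)
        have heq : (fun y => (1 / N) * u y) = fun y => u y / N := by
          funext y; field_simp
        rwa [heq] at h00
      exact h0.exp
    unfold gradSq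
    rw [Finset.sum_mul, Finset.sum_div]
    refine Finset.sum_congr rfl fun i _ => ?_
    rw [hv'.fderiv]
    simp only [ContinuousLinearMap.smul_apply, smul_eq_mul]
    have hsq : Real.exp (u x / N) * Real.exp (u x / N) = w x := by
      show Real.exp (u x / N) * Real.exp (u x / N) = Real.exp (c * u x)
      rw [← Real.exp_add, hcdef, ← add_div, div_mul_eq_mul_div, two_mul]
    have hcalc : (Real.exp (u x / N) * (1 / N * fderiv ℝ u x (EuclideanSpace.single i 1))) ^ 2
        = (fderiv ℝ u x (EuclideanSpace.single i 1)) ^ 2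
          * (Real.exp (u x / N) * Real.exp (u x / N)) / N ^ 2 := by
      field_simp
    rw [hcalc, hsq]
  have hAeq : (∫ x in unitCell m, gradSq (fun y => Real.exp (u y / N)) x) = G / N ^ 2 := by
    rw [setIntegral_congr_fun hmeas (fun x _ => hApt x), integral_div, hGdef]
  rw [hAeq, hBeq] at hstab
  have h5 : 0 ≤ N ^ 2 * (G / N ^ 2 - c * (c * G + α * E')) :=
    mul_nonneg (sq_nonneg N) hstab
  have h6 : N ^ 2 * (G / N ^ 2 - c * (c * G + α * E')) = -(3 * G) - 2 * N * (α * E') := by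
    rw [hcdef]
    field_simp [hN.ne']
    ring
  rw [h6] at h5
  show 3 / (2 * N) * G ≤ -α * E'
  rw [div_mul_eq_mul_div, div_le_iff₀ (by positivity : (0:ℝ) < 2 * N)]
  nlinarith [h5]
end

section
/- Let n ≥ 1 be an integer, m = 2n, and α_* ≤ α real numbers. Let S, h : ℝ^m → ℝ be continuous ℤ^m-periodic functions, and let u, f be C² ℤ^m-periodic functions satisfying −Δu + α = S·e^{(2/n)u} and −Δf + α_* = h·e^{(2/n)f} on ℝ^m. Assume u is stable, i.e. ∫_{[0,1]^m} |∇φ|² dx − (2/n)∫_{[0,1]^m} S·e^{(2/n)u}·φ² dx ≥ 0 for every C¹ ℤ^m-periodic φ. Then, with w = u − f, one has (3n/2) ∫_{[0,1]^m} |∇(e^{w/n})|² dx ≤ −∫_{[0,1]^m} h·e^{(2/n)u} dx. -/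
open MeasureTheory Real

namespace CEI

noncomputable def L (m : ℕ) : (Fin m → ℝ) ≃L[ℝ] EuclideanSpace ℝ (Fin m) :=
  (PiLp.continuousLinearEquiv 2 ℝ (fun _ : Fin m => ℝ)).symm

variable {m : ℕ}

lemma unitCell_eq : unitCell m = (MeasurableEquiv.toLp 2 (Fin m → ℝ)).symm ⁻¹' (Set.Icc 0 1) := by
  ext x
  simp [unitCell, Set.mem_Icc, Pi.le_def, forall_and]

lemma integral_unitCell (G : EuclideanSpace ℝ (Fin m) → ℝ) :
    ∫ x in unitCell m, G x = ∫ y in Set.Icc (0 : Fin m → ℝ) 1, G (L m y) := by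
  rw [unitCell_eq, ← (EuclideanSpace.volume_preserving_symm_measurableEquiv_toLp (Fin m)).setIntegral_preimage_emb
    (MeasurableEquiv.toLp 2 (Fin m → ℝ)).symm.measurableEmbedding (fun y => G (L m y)) _]
  rfl

lemma unitCell_image : unitCell m = (L m) '' (Set.Icc 0 1) := by
  rw [unitCell_eq]
  ext x
  constructor
  · intro hx; exact ⟨_, hx, rfl⟩
  · rintro ⟨y, hy, rfl⟩; exact hy

lemma isCompact_unitCell : IsCompact (unitCell m) := by
  rw [unitCell_image]; exact isCompact_Icc.image (L m).continuous

lemma measurableSet_unitCell : MeasurableSet (unitCell m) :=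
  isCompact_unitCell.isClosed.measurableSet

lemma fderiv_transfer (v : EuclideanSpace ℝ (Fin m) → ℝ) (y : Fin m → ℝ) (i : Fin m) :
    fderiv ℝ (fun z => v (L m z)) y (Pi.single i 1)
      = fderiv ℝ v (L m y) (EuclideanSpace.single i 1) := by
  rw [show (fun z => v (L m z)) = v ∘ (L m) from rfl, (L m).comp_right_fderiv]
  rfl

lemma fderiv_shift {E : Type*} [NormedAddCommGroup E] [NormedSpace ℝ E]
    (f : E → ℝ) (c x : E) (hf : DifferentiableAt ℝ f (x + c)) :
    fderiv ℝ (fun y => f (y + c)) x = fderiv ℝ f (x + c) := by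
  have h1 : HasFDerivAt (fun y : E => y + c) (ContinuousLinearMap.id ℝ E) x :=
    (hasFDerivAt_id x).add_const c
  have := (hf.hasFDerivAt.comp x h1).fderiv
  simpa [Function.comp_def] using this

lemma insertNth_one_eq {N : ℕ} (i : Fin (N + 1)) (y : Fin N → ℝ) :
    (i.insertNth (1:ℝ) y : Fin (N+1) → ℝ)
      = (i.insertNth (0:ℝ) y : Fin (N+1) → ℝ) + Pi.single i 1 := by
  funext j
  rcases eq_or_ne j i with rfl | hj
  · simp
  · rcases Fin.exists_succAbove_eq hj with ⟨k, rfl⟩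
    simp [Fin.insertNth_apply_succAbove, Pi.single_apply, (Fin.succAbove_ne i k)]

lemma cont_partial' {E : Type*} [NormedAddCommGroup E] [NormedSpace ℝ E]
    (v : E → ℝ) (hv : ContDiff ℝ 1 v) (s : E) :
    Continuous (fun x => fderiv ℝ v x s) :=
  (ContinuousLinearMap.apply ℝ ℝ s).continuous.comp (hv.continuous_fderiv one_ne_zero)

lemma divergence_zero {N : ℕ} (F : Fin (N + 1) → (Fin (N + 1) → ℝ) → ℝ)
    (hF : ∀ i, ContDiff ℝ 1 (F i))
    (hper : ∀ i (k : Fin (N + 1) → ℤ) x, F i (x + fun j => (k j : ℝ)) = F i x) :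
    ∫ y in Set.Icc (0 : Fin (N + 1) → ℝ) 1,
      ∑ i, fderiv ℝ (F i) y (Pi.single i 1) = 0 := by
  have hcont : Continuous fun y : Fin (N + 1) → ℝ => ∑ i, fderiv ℝ (F i) y (Pi.single i 1) :=
    continuous_finset_sum _ fun i _ => cont_partial' (F i) (hF i) _
  have key := MeasureTheory.integral_divergence_of_hasFDerivAt_off_countable'
    (0 : Fin (N + 1) → ℝ) 1 zero_le_one F (fun i y => fderiv ℝ (F i) y) ∅ Set.countable_empty
    (fun i => (hF i).continuous.continuousOn)
    (fun x _ i => ((hF i).differentiable one_ne_zero x).hasFDerivAt)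
    (hcont.continuousOn.integrableOn_compact isCompact_Icc)
  rw [key]
  apply Finset.sum_eq_zero
  intro i _
  have hfb : ∀ x : Fin N → ℝ, F i (i.insertNth ((1 : Fin (N + 1) → ℝ) i) x)
      = F i (i.insertNth ((0 : Fin (N + 1) → ℝ) i) x) := by
    intro x
    have h1 : (i.insertNth (1:ℝ) x : Fin (N+1) → ℝ)
        = i.insertNth (0:ℝ) x + (fun j => ((Pi.single i 1 : Fin (N+1) → ℤ) j : ℝ)) := by
      rw [insertNth_one_eq]
      congr 1
      funext j
      simp [Pi.single_apply]
    simp only [Pi.one_apply, Pi.zero_apply, h1, hper i (Pi.single i 1)]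
  simp only [hfb, sub_self]

lemma periodic_partial (v : EuclideanSpace ℝ (Fin m) → ℝ) (hv : Differentiable ℝ v)
    (hvp : ZPeriodic v) (s : EuclideanSpace ℝ (Fin m)) :
    ZPeriodic (fun x => fderiv ℝ v x s) := by
  intro k x
  set c := (WithLp.equiv 2 (Fin m → ℝ)).symm (fun i => (k i : ℝ))
  have hfun : (fun y => v (y + c)) = v := funext fun y => hvp k y
  have := fderiv_shift v c x (hv _)
  rw [hfun] at this
  simp only []
  rw [← this]

lemma contDiff_partial (v : EuclideanSpace ℝ (Fin m) → ℝ) (hv : ContDiff ℝ 2 v)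
    (s : EuclideanSpace ℝ (Fin m)) :
    ContDiff ℝ 1 (fun x => fderiv ℝ v x s) :=
  (ContinuousLinearMap.apply ℝ ℝ s).contDiff.comp (hv.fderiv_right (by norm_num))

lemma continuous_lapl (v : EuclideanSpace ℝ (Fin m) → ℝ) (hv : ContDiff ℝ 2 v) :
    Continuous (lapl v) :=
  continuous_finset_sum _ fun i _ =>
    cont_partial' _ (contDiff_partial v hv (EuclideanSpace.single i 1)) _

lemma continuous_gradSq (v : EuclideanSpace ℝ (Fin m) → ℝ) (hv : ContDiff ℝ 1 v) :
    Continuous (gradSq v) :=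
  continuous_finset_sum _ fun i _ => (cont_partial' v hv _).pow 2

lemma ibp (hm : 0 < m) (v g : EuclideanSpace ℝ (Fin m) → ℝ)
    (hv : ContDiff ℝ 2 v) (hvp : ZPeriodic v)
    (hg : ContDiff ℝ 2 g) (hgp : ZPeriodic g) :
    ∫ x in unitCell m, (lapl v x * g x
      + ∑ i, fderiv ℝ v x (EuclideanSpace.single i 1)
          * fderiv ℝ g x (EuclideanSpace.single i 1)) = 0 := by
  obtain ⟨N, rfl⟩ : ∃ N, m = N + 1 := ⟨m - 1, (Nat.succ_pred_eq_of_pos hm).symm⟩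
  set P : Fin (N + 1) → EuclideanSpace ℝ (Fin (N + 1)) → ℝ :=
    fun i x => fderiv ℝ v x (EuclideanSpace.single i 1) * g x with hP
  have hPc : ∀ i, ContDiff ℝ 1 (P i) := fun i =>
    (contDiff_partial v hv _).mul (hg.of_le one_le_two)
  set F : Fin (N + 1) → (Fin (N + 1) → ℝ) → ℝ := fun i y => P i (L _ y) with hFdef
  have hF : ∀ i, ContDiff ℝ 1 (F i) := fun i => (hPc i).comp (L _).contDiff
  have hFper : ∀ i (k : Fin (N + 1) → ℤ) y, F i (y + fun j => (k j : ℝ)) = F i y := by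
    intro i k y
    have hL : L (N+1) (y + fun j => (k j : ℝ))
        = L (N+1) y + (WithLp.equiv 2 (Fin (N+1) → ℝ)).symm (fun j => (k j : ℝ)) := by
      rw [map_add]; rfl
    have h1 : fderiv ℝ v (L (N+1) y + (WithLp.equiv 2 (Fin (N+1) → ℝ)).symm (fun j => (k j : ℝ)))
        (EuclideanSpace.single i 1)
        = fderiv ℝ v (L (N+1) y) (EuclideanSpace.single i 1) :=
      periodic_partial v (hv.differentiable two_ne_zero) hvp (EuclideanSpace.single i 1) k (L _ y)
    simp only [hFdef, hL, hP]
    rw [h1, hgp k (L _ y)]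
  have hdiv := divergence_zero F hF hFper
  rw [integral_unitCell]
  rw [← hdiv]
  apply setIntegral_congr_fun measurableSet_Icc
  intro y _
  have htr : ∀ i, fderiv ℝ (F i) y (Pi.single i 1)
      = fderiv ℝ (P i) (L _ y) (EuclideanSpace.single i 1) := fun i => fderiv_transfer (P i) y i
  have hprod : ∀ i, fderiv ℝ (P i) (L _ y) (EuclideanSpace.single i 1)
      = fderiv ℝ v (L _ y) (EuclideanSpace.single i 1)
          * fderiv ℝ g (L _ y) (EuclideanSpace.single i 1)
        + g (L _ y) * fderiv ℝ (fun x => fderiv ℝ v x (EuclideanSpace.single i 1)) (L _ y)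
            (EuclideanSpace.single i 1) := by
    intro i
    have := fderiv_fun_mul (𝕜 := ℝ)
      (((contDiff_partial v hv (EuclideanSpace.single i 1)).differentiable one_ne_zero) (L _ y))
      ((hg.differentiable two_ne_zero) (L _ y))
    simp only [hP]
    rw [this]
    simp [ContinuousLinearMap.add_apply, ContinuousLinearMap.smul_apply, smul_eq_mul]
  simp only [htr, hprod, Finset.sum_add_distrib, lapl, Finset.sum_mul]
  rw [add_comm]
  congr 1
  apply Finset.sum_congr rfl; intro i _; ring

lemma lapl_sub (u f : EuclideanSpace ℝ (Fin m) → ℝ) (hu : ContDiff ℝ 2 u) (hf : ContDiff ℝ 2 f)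
    (x : EuclideanSpace ℝ (Fin m)) :
    lapl (fun y => u y - f y) x = lapl u x - lapl f x := by
  unfold lapl
  rw [← Finset.sum_sub_distrib]
  refine Finset.sum_congr rfl fun i _ => ?_
  set s := EuclideanSpace.single i (1:ℝ)
  have hDi : (fun y => fderiv ℝ (fun z => u z - f z) y s)
      = (fun y => fderiv ℝ u y s - fderiv ℝ f y s) := by
    funext y
    rw [fderiv_fun_sub (hu.differentiable two_ne_zero y) (hf.differentiable two_ne_zero y)]
    rfl
  rw [hDi, fderiv_fun_sub
    (((contDiff_partial u hu s).differentiable one_ne_zero) x)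
    (((contDiff_partial f hf s).differentiable one_ne_zero) x)]
  rfl

end CEI

open CEI

/-- The central energy inequality in the proof of Lemma 3.4: if `u` is a stable `C²`
periodic solution of `−Δu + α = S e^{(2/n)u}`, `f` is a `C²` periodic solution of
`−Δf + α_* = h e^{(2/n)f}` and `α_* ≤ α`, then with `w = u − f` one has
`(3n/2) ∫ |∇(e^{w/n})|² ≤ −∫ h e^{(2/n)u}`. -/
theorem central_energy_inequality
    (n : ℕ) (hn : 1 ≤ n) (m : ℕ) (hm : m = 2 * n)
    (αstar α : ℝ) (hα : αstar ≤ α)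
    (S h : EuclideanSpace ℝ (Fin m) → ℝ)
    (hS : Continuous S) (hSper : ZPeriodic S)
    (hh : Continuous h) (hhper : ZPeriodic h)
    (u f : EuclideanSpace ℝ (Fin m) → ℝ)
    (hu : ContDiff ℝ 2 u) (huper : ZPeriodic u)
    (hf : ContDiff ℝ 2 f) (hfper : ZPeriodic f)
    (hueq : ∀ x, -lapl u x + α = S x * Real.exp ((2 / (n : ℝ)) * u x))
    (hfeq : ∀ x, -lapl f x + αstar = h x * Real.exp ((2 / (n : ℝ)) * f x))
    (hstab : ∀ φ : EuclideanSpace ℝ (Fin m) → ℝ, ContDiff ℝ 1 φ → ZPeriodic φ →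
      0 ≤ (∫ x in unitCell m, gradSq φ x) -
        (2 / (n : ℝ)) * ∫ x in unitCell m,
          S x * Real.exp ((2 / (n : ℝ)) * u x) * (φ x) ^ 2) :
    (3 * (n : ℝ) / 2) *
        ∫ x in unitCell m, gradSq (fun y => Real.exp ((u y - f y) / (n : ℝ))) x ≤
      -∫ x in unitCell m, h x * Real.exp ((2 / (n : ℝ)) * u x) := by
  have hm0 : 0 < m := by omega
  have hn0 : (0:ℝ) < n := by exact_mod_cast hn
  have hn' : (n:ℝ) ≠ 0 := ne_of_gt hn0
  set w : EuclideanSpace ℝ (Fin m) → ℝ := fun y => u y - f y with hwdef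
  set φ : EuclideanSpace ℝ (Fin m) → ℝ := fun y => Real.exp ((u y - f y) / (n:ℝ)) with hφdef
  set g : EuclideanSpace ℝ (Fin m) → ℝ :=
    fun y => Real.exp ((2 / (n:ℝ)) * (u y - f y)) with hgdef
  -- smoothness
  have hwC : ContDiff ℝ 2 w := hu.sub hf
  have hφC : ContDiff ℝ 2 φ := Real.contDiff_exp.comp (hwC.div_const _)
  have hgC : ContDiff ℝ 2 g := Real.contDiff_exp.comp (contDiff_const.mul hwC)
  -- periodicity
  have hwp : ZPeriodic w := fun k x => by
    simp only [hwdef]; rw [huper k x, hfper k x]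
  have hφp : ZPeriodic φ := fun k x => by
    simp only [hφdef]; rw [huper k x, hfper k x]
  have hgp : ZPeriodic g := fun k x => by
    simp only [hgdef]; rw [huper k x, hfper k x]
  -- pointwise facts
  have hφ2 : ∀ x, φ x ^ 2 = g x := by
    intro x
    simp only [hφdef, hgdef, pow_two, ← Real.exp_add]
    congr 1
    ring
  have hDφ : ∀ x s, fderiv ℝ φ x s = φ x / (n:ℝ) * fderiv ℝ w x s := by
    intro x s
    have hwd : HasFDerivAt w (fderiv ℝ w x) x := ((hwC.differentiable two_ne_zero) x).hasFDerivAt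
    have h1 : HasFDerivAt (fun y => (u y - f y) / (n:ℝ)) (((n:ℝ)⁻¹) • fderiv ℝ w x) x := by
      simp only [div_eq_mul_inv]
      exact hwd.mul_const _
    have h2 := (h1.exp).fderiv
    simp only [hφdef]
    rw [h2]
    simp only [ContinuousLinearMap.smul_apply, smul_eq_mul]
    ring
  have hDg : ∀ x s, fderiv ℝ g x s = (2 / (n:ℝ)) * g x * fderiv ℝ w x s := by
    intro x s
    have hwd : HasFDerivAt w (fderiv ℝ w x) x := ((hwC.differentiable two_ne_zero) x).hasFDerivAt
    have h1 : HasFDerivAt (fun y => (2 / (n:ℝ)) * (u y - f y))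
        ((2 / (n:ℝ)) • fderiv ℝ w x) x := hwd.const_mul _
    have h2 := (h1.exp).fderiv
    simp only [hgdef]
    rw [h2]
    simp only [ContinuousLinearMap.smul_apply, smul_eq_mul]
    ring
  have keyGrad : ∀ x, (∑ i, fderiv ℝ w x (EuclideanSpace.single i 1)
      * fderiv ℝ g x (EuclideanSpace.single i 1)) = 2 * (n:ℝ) * gradSq φ x := by
    intro x
    unfold gradSq
    rw [Finset.mul_sum]
    refine Finset.sum_congr rfl fun i _ => ?_
    rw [hDg x _, hDφ x _]
    rw [show (φ x / (n:ℝ) * fderiv ℝ w x (EuclideanSpace.single i 1)) ^ 2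
        = φ x ^ 2 * ((fderiv ℝ w x (EuclideanSpace.single i 1)) ^ 2 / (n:ℝ) ^ 2) from by ring,
      hφ2 x]
    field_simp
  have hexpfg : ∀ x, Real.exp ((2 / (n:ℝ)) * f x) * g x = Real.exp ((2 / (n:ℝ)) * u x) := by
    intro x
    simp only [hgdef, ← Real.exp_add]
    congr 1
    ring
  have keyIdent : ∀ x, -(lapl w x * g x) + (α - αstar) * g x
      = S x * Real.exp ((2 / (n:ℝ)) * u x) * φ x ^ 2
        - h x * Real.exp ((2 / (n:ℝ)) * u x) := by
    intro x
    have h1 := hueq x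
    have h2 := hfeq x
    have h3 : lapl w x = lapl u x - lapl f x := lapl_sub u f hu hf x
    calc -(lapl w x * g x) + (α - αstar) * g x
        = ((-lapl u x + α) - (-lapl f x + αstar)) * g x := by rw [h3]; ring
      _ = (S x * Real.exp ((2 / (n:ℝ)) * u x) - h x * Real.exp ((2 / (n:ℝ)) * f x)) * g x := by
          rw [h1, h2]
      _ = S x * Real.exp ((2 / (n:ℝ)) * u x) * φ x ^ 2
            - h x * (Real.exp ((2 / (n:ℝ)) * f x) * g x) := by rw [hφ2 x]; ring
      _ = _ := by rw [hexpfg x]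
  -- integrability
  have hInt : ∀ G : EuclideanSpace ℝ (Fin m) → ℝ, Continuous G →
      IntegrableOn G (unitCell m) := fun G hG =>
    hG.continuousOn.integrableOn_compact isCompact_unitCell
  have cg : Continuous g := hgC.continuous
  have cφ : Continuous φ := hφC.continuous
  have cG1 : Continuous (fun x => lapl w x * g x) := (continuous_lapl w hwC).mul cg
  have cG2 : Continuous (gradSq φ) := continuous_gradSq φ (hφC.of_le one_le_two)
  have cexp : Continuous (fun x => Real.exp ((2 / (n:ℝ)) * u x)) :=
    Real.continuous_exp.comp (continuous_const.mul hu.continuous)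
  have cG3 : Continuous (fun x => S x * Real.exp ((2 / (n:ℝ)) * u x) * φ x ^ 2) :=
    (hS.mul cexp).mul (cφ.pow 2)
  have cG4 : Continuous (fun x => h x * Real.exp ((2 / (n:ℝ)) * u x)) := hh.mul cexp
  -- IBP
  have hIBP := ibp hm0 w g hwC hwp hgC hgp
  simp only [keyGrad] at hIBP
  rw [integral_add (hInt _ cG1) ((hInt _ cG2).const_mul (2 * (n:ℝ))),
    integral_const_mul] at hIBP
  -- PDE identity integrated
  have hsplit := setIntegral_congr_fun (μ := volume) measurableSet_unitCell
    (fun x _ => keyIdent x)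
  rw [integral_add (hInt (fun x => -(lapl w x * g x)) cG1.neg) ((hInt _ cg).const_mul (α - αstar)),
    integral_neg, integral_const_mul,
    integral_sub (hInt _ cG3) (hInt _ cG4)] at hsplit
  -- stability
  have hst := hstab φ (hφC.of_le one_le_two) hφp
  -- nonnegativity
  have hIg : 0 ≤ ∫ x in unitCell m, g x :=
    setIntegral_nonneg measurableSet_unitCell fun x _ => (Real.exp_pos _).le
  have hI1 : 0 ≤ ∫ x in unitCell m, gradSq φ x :=
    setIntegral_nonneg measurableSet_unitCell fun x _ =>
      Finset.sum_nonneg fun i _ => sq_nonneg _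
  set I1 := ∫ x in unitCell m, gradSq φ x
  set I2 := ∫ x in unitCell m, S x * Real.exp ((2 / (n:ℝ)) * u x) * φ x ^ 2
  set I3 := ∫ x in unitCell m, h x * Real.exp ((2 / (n:ℝ)) * u x)
  set Ig := ∫ x in unitCell m, g x
  have hC' : I2 ≤ ((n:ℝ) / 2) * I1 := by
    have h1 : (2 / (n:ℝ)) * I2 ≤ I1 := by linarith
    have h2 : I2 = ((n:ℝ) / 2) * ((2 / (n:ℝ)) * I2) := by field_simp
    rw [h2]
    exact mul_le_mul_of_nonneg_left h1 (by positivity)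
  have hIg0 : 0 ≤ (α - αstar) * Ig := mul_nonneg (by linarith) hIg
  have hB : 2 * (n:ℝ) * I1 + (α - αstar) * Ig = I2 - I3 := by linarith
  calc (3 * (n:ℝ) / 2) * I1
      = (2 * (n:ℝ) * I1 + (α - αstar) * Ig) - ((n:ℝ) / 2) * I1 - (α - αstar) * Ig := by ring
    _ = (I2 - I3) - ((n:ℝ) / 2) * I1 - (α - αstar) * Ig := by rw [hB]
    _ ≤ (I2 - I3) - I2 - 0 := by linarith
    _ = -I3 := by ring
end

section
/- Let n ≥ 1 be an integer, m = 2n, Ω ⊆ ℝ^m an open set, K ⊂ Ω a compact set, α_* < 0 a real number, and S : Ω → ℝ a continuous function with S(x) < 0 for all x ∈ Ω. Then there exists a constant C > 0, depending only on n, K, Ω, S and α_*, such that for every α ∈ [α_*, 0] and every u ∈ C²(Ω) satisfying −Δu + α = S·e^{(2/n)u} on Ω, one has sup_K u ≤ C. -/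
open MeasureTheory Real Metric

lemma second_deriv_nonpos_at_localMax {f : ℝ → ℝ} {d : ℝ}
    (hmax : IsLocalMax f 0)
    (hdiff : ∀ᶠ t in nhds (0:ℝ), DifferentiableAt ℝ f t)
    (hd : HasDerivAt (deriv f) d 0) : d ≤ 0 := by
  by_contra hpos
  push_neg at hpos
  have h0 : deriv f 0 = 0 := hmax.deriv_eq_zero
  have hslope : Filter.Tendsto (slope (deriv f) 0) (nhdsWithin 0 {(0:ℝ)}ᶜ) (nhds d) := by
    have := (hd.hasDerivWithinAt (s := {(0:ℝ)}ᶜ))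
    rw [hasDerivWithinAt_iff_tendsto_slope] at this
    simpa [Set.diff_eq] using this
  have hpos' : ∀ᶠ t in nhdsWithin (0:ℝ) {(0:ℝ)}ᶜ, 0 < slope (deriv f) 0 t :=
    hslope.eventually (eventually_gt_nhds hpos)
  rw [eventually_nhdsWithin_iff] at hpos'
  obtain ⟨ε, hε, hball⟩ := Metric.eventually_nhds_iff.mp (hpos'.and (hdiff.and hmax))
  have key : ∀ t ∈ Set.Ioo (0:ℝ) ε, 0 < deriv f t := by
    intro t ht
    have habs : dist t 0 < ε := by
      rw [Real.dist_eq, sub_zero, abs_of_pos ht.1]; exact ht.2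
    have h1 := (hball habs).1 (by simp [ne_of_gt ht.1])
    rw [slope_def_field, h0, sub_zero, sub_zero] at h1
    have := mul_pos h1 ht.1
    rwa [div_mul_cancel₀ _ (ne_of_gt ht.1)] at this
  -- f strictly increasing on [0, ε/2]
  have hcont : ContinuousOn f (Set.Icc 0 (ε/2)) := by
    intro t ht
    refine ((hball ?_).2.1).continuousAt.continuousWithinAt
    rw [Real.dist_eq, sub_zero, abs_of_nonneg ht.1]
    exact lt_of_le_of_lt ht.2 (by linarith)
  have hmono : StrictMonoOn f (Set.Icc 0 (ε/2)) := by
    apply strictMonoOn_of_deriv_pos (convex_Icc _ _) hcont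
    intro t ht
    rw [interior_Icc] at ht
    exact key t ⟨ht.1, by linarith [ht.2]⟩
  have hlt : f 0 < f (ε/2) :=
    hmono (by constructor <;> linarith) (by constructor <;> linarith) (by linarith)
  have hle : f (ε/2) ≤ f 0 := (hball (by rw [Real.dist_eq, sub_zero, abs_of_pos (by linarith)]; linarith)).2.2
  linarith

lemma lapl_nonpos_at_localMax {m : ℕ} {u : EuclideanSpace ℝ (Fin m) → ℝ}
    {U : Set (EuclideanSpace ℝ (Fin m))} (hU : IsOpen U)
    (hu : ContDiffOn ℝ 2 u U) {x : EuclideanSpace ℝ (Fin m)} (hx : x ∈ U)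
    (hmax : IsLocalMax u x) : lapl u x ≤ 0 := by
  have hdiffU : ∀ y ∈ U, DifferentiableAt ℝ u y := fun y hy =>
    (hu.differentiableOn (by norm_num)).differentiableAt (hU.mem_nhds hy)
  have hfd : ContDiffOn ℝ 1 (fderiv ℝ u) U := hu.fderiv_of_isOpen hU (by norm_num)
  have hfdx : DifferentiableAt ℝ (fderiv ℝ u) x :=
    (hfd.differentiableOn one_ne_zero).differentiableAt (hU.mem_nhds hx)
  rw [lapl]
  apply Finset.sum_nonpos
  intro i _
  set e := EuclideanSpace.single (𝕜 := ℝ) i (1:ℝ) with he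
  set L : ℝ → EuclideanSpace ℝ (Fin m) := fun t => x + t • e with hL
  have hLd : ∀ t, HasDerivAt L e t := fun t => by
    have := ((hasDerivAt_id t).smul_const e).const_add x; rw [one_smul] at this; exact this
  have hLc : Continuous L := by fun_prop
  have hL0 : L 0 = x := by simp [hL]
  have hLt : Filter.Tendsto L (nhds 0) (nhds x) := by
    have := hLc.continuousAt (x := (0:ℝ))
    rwa [ContinuousAt, hL0] at this
  have hLU : ∀ᶠ t in nhds (0:ℝ), L t ∈ U := hLt.eventually (hU.mem_nhds hx)
  set f : ℝ → ℝ := fun t => u (L t) with hf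
  -- apply function y ↦ fderiv u y e
  have happly : DifferentiableAt ℝ (fun y => fderiv ℝ u y e) x :=
    ((ContinuousLinearMap.apply ℝ ℝ e).differentiableAt).comp x hfdx
  have happly' : HasFDerivAt (fun y => fderiv ℝ u y e)
      (fderiv ℝ (fun y => fderiv ℝ u y e) x) (L 0) := by
    rw [hL0]; exact happly.hasFDerivAt
  have hg : HasDerivAt (fun t => fderiv ℝ u (L t) e)
      ((fderiv ℝ (fun y => fderiv ℝ u y e) x) e) 0 :=
    happly'.comp_hasDerivAt 0 (hLd 0)
  -- f differentiable near 0 with deriv f t = fderiv u (L t) e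
  have hfev : ∀ᶠ t in nhds (0:ℝ), HasDerivAt f (fderiv ℝ u (L t) e) t := by
    filter_upwards [hLU] with t ht
    exact ((hdiffU _ ht).hasFDerivAt).comp_hasDerivAt t (hLd t)
  have hfdiff : ∀ᶠ t in nhds (0:ℝ), DifferentiableAt ℝ f t := by
    filter_upwards [hfev] with t ht using ht.differentiableAt
  have hderiveq : (deriv f) =ᶠ[nhds (0:ℝ)] (fun t => fderiv ℝ u (L t) e) := by
    filter_upwards [hfev] with t ht using ht.deriv
  have hderiv2 : HasDerivAt (deriv f) ((fderiv ℝ (fun y => fderiv ℝ u y e) x) e) 0 :=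
    hg.congr_of_eventuallyEq hderiveq
  have hfmax : IsLocalMax f 0 := by
    have := hLt.eventually hmax
    simpa [IsLocalMax, IsMaxFilter, hf, hL0] using this
  exact second_deriv_nonpos_at_localMax hfmax hfdiff hderiv2

lemma lapl_sub {m : ℕ} {u v : EuclideanSpace ℝ (Fin m) → ℝ}
    {U : Set (EuclideanSpace ℝ (Fin m))} (hU : IsOpen U)
    (hu : ContDiffOn ℝ 2 u U) (hv : ContDiffOn ℝ 2 v U)
    {x : EuclideanSpace ℝ (Fin m)} (hx : x ∈ U) :
    lapl (fun y => u y - v y) x = lapl u x - lapl v x := by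
  have hud : ∀ y ∈ U, DifferentiableAt ℝ u y := fun y hy =>
    (hu.differentiableOn (by norm_num)).differentiableAt (hU.mem_nhds hy)
  have hvd : ∀ y ∈ U, DifferentiableAt ℝ v y := fun y hy =>
    (hv.differentiableOn (by norm_num)).differentiableAt (hU.mem_nhds hy)
  have hufd : DifferentiableAt ℝ (fderiv ℝ u) x :=
    ((hu.fderiv_of_isOpen hU (by norm_num)).differentiableOn
      (one_ne_zero : (1 : WithTop ℕ∞) ≠ 0)).differentiableAt (hU.mem_nhds hx)
  have hvfd : DifferentiableAt ℝ (fderiv ℝ v) x :=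
    ((hv.fderiv_of_isOpen hU (by norm_num)).differentiableOn
      (one_ne_zero : (1 : WithTop ℕ∞) ≠ 0)).differentiableAt (hU.mem_nhds hx)
  rw [lapl, lapl, lapl, ← Finset.sum_sub_distrib]
  apply Finset.sum_congr rfl
  intro i _
  set e := EuclideanSpace.single (𝕜 := ℝ) i (1:ℝ)
  have hEq : (fun y => fderiv ℝ (fun z => u z - v z) y e)
      =ᶠ[nhds x] (fun y => fderiv ℝ u y e - fderiv ℝ v y e) := by
    filter_upwards [hU.mem_nhds hx] with y hy
    rw [fderiv_fun_sub (hud y hy) (hvd y hy)]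
    simp
  rw [hEq.fderiv_eq]
  have hau : DifferentiableAt ℝ (fun y => fderiv ℝ u y e) x :=
    ((ContinuousLinearMap.apply ℝ ℝ e).differentiableAt).comp x hufd
  have hav : DifferentiableAt ℝ (fun y => fderiv ℝ v y e) x :=
    ((ContinuousLinearMap.apply ℝ ℝ e).differentiableAt).comp x hvfd
  rw [fderiv_fun_sub hau hav]
  simp

variable {m : ℕ}

/-- squared distance to `x₀` as a sum of squares -/
noncomputable def qfun (x₀ x : EuclideanSpace ℝ (Fin m)) : ℝ := ∑ j, (x j - x₀ j) ^ 2

/-- the derivative of `qfun` -/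
noncomputable def qder (x₀ x : EuclideanSpace ℝ (Fin m)) : EuclideanSpace ℝ (Fin m) →L[ℝ] ℝ :=
  ∑ j, (2 * (x j - x₀ j)) • (EuclideanSpace.proj j : EuclideanSpace ℝ (Fin m) →L[ℝ] ℝ)

lemma qder_apply (x₀ x : EuclideanSpace ℝ (Fin m)) (i : Fin m) :
    qder x₀ x (EuclideanSpace.single i 1) = 2 * (x i - x₀ i) := by
  rw [qder, ContinuousLinearMap.sum_apply]
  rw [Finset.sum_eq_single i]
  · simp [EuclideanSpace.proj]
  · intro j _ hj
    simp [EuclideanSpace.proj, EuclideanSpace.single_apply, hj]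
  · simp

lemma hasFDerivAt_qfun (x₀ x : EuclideanSpace ℝ (Fin m)) :
    HasFDerivAt (qfun x₀) (qder x₀ x) x := by
  apply HasFDerivAt.fun_sum
  intro j _
  have h : HasFDerivAt (fun y : EuclideanSpace ℝ (Fin m) => y j - x₀ j)
      (EuclideanSpace.proj j : EuclideanSpace ℝ (Fin m) →L[ℝ] ℝ) x := by
    simpa using ((EuclideanSpace.proj (𝕜 := ℝ) j).hasFDerivAt.sub_const (x₀ j))
  have := h.mul h
  convert this using 1
  · ext y; ring
  · ext v; simp; ring
  · rw [two_mul, add_smul]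

lemma contDiff_qfun (x₀ : EuclideanSpace ℝ (Fin m)) : ContDiff ℝ 2 (qfun x₀) := by
  apply ContDiff.sum
  intro j _
  exact ((EuclideanSpace.proj (𝕜 := ℝ) j).contDiff.sub contDiff_const).pow 2

lemma qfun_eq_dist (x₀ x : EuclideanSpace ℝ (Fin m)) : qfun x₀ x = dist x x₀ ^ 2 := by
  rw [EuclideanSpace.dist_eq, Real.sq_sqrt (by positivity)]
  simp [qfun, Real.dist_eq, sq_abs]

/-- The barrier function. -/
noncomputable def vfun (n : ℕ) (r c : ℝ) (x₀ x : EuclideanSpace ℝ (Fin m)) : ℝ :=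
  c - n * Real.log (r ^ 2 - qfun x₀ x)

lemma contDiffOn_vfun (n : ℕ) (r c : ℝ) (x₀ : EuclideanSpace ℝ (Fin m)) :
    ContDiffOn ℝ 2 (vfun n r c x₀) {x | r ^ 2 - qfun x₀ x ≠ 0} := by
  intro x hx
  apply ContDiffWithinAt.sub contDiffWithinAt_const
  apply ContDiffWithinAt.mul contDiffWithinAt_const
  have hg : ContDiffAt ℝ 2 (fun y => r ^ 2 - qfun x₀ y) x :=
    (contDiffAt_const (c := r ^ 2)).sub (contDiff_qfun x₀).contDiffAt
  exact ((Real.contDiffAt_log.mpr hx).comp x hg).contDiffWithinAt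

lemma hasFDerivAt_vfun (n : ℕ) (r c : ℝ) (x₀ x : EuclideanSpace ℝ (Fin m))
    (h : r ^ 2 - qfun x₀ x ≠ 0) :
    HasFDerivAt (vfun n r c x₀)
      (((n : ℝ) * (r ^ 2 - qfun x₀ x)⁻¹) • qder x₀ x) x := by
  have hg : HasFDerivAt (fun y => r ^ 2 - qfun x₀ y) (-qder x₀ x) x := by
    have := (hasFDerivAt_const (r ^ 2) x).sub (hasFDerivAt_qfun x₀ x); rw [zero_sub] at this; exact this
  have hlog : HasFDerivAt (fun y => Real.log (r ^ 2 - qfun x₀ y))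
      ((r ^ 2 - qfun x₀ x)⁻¹ • (-qder x₀ x)) x :=
    by have := (Real.hasDerivAt_log h).comp_hasFDerivAt x hg; exact this
  have : HasFDerivAt (fun y => c - (n:ℝ) * Real.log (r ^ 2 - qfun x₀ y))
      (0 - (n:ℝ) • (r ^ 2 - qfun x₀ x)⁻¹ • (-qder x₀ x)) x :=
    (hasFDerivAt_const c x).sub (hlog.const_mul (n : ℝ))
  convert this using 1
  ext v
  simp [vfun]
  ring
  rw [zero_sub, smul_neg, smul_neg, neg_neg, smul_smul]

lemma fderiv_vfun_single (n : ℕ) (r c : ℝ) (x₀ y : EuclideanSpace ℝ (Fin m)) (i : Fin m)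
    (h : r ^ 2 - qfun x₀ y ≠ 0) :
    fderiv ℝ (vfun n r c x₀) y (EuclideanSpace.single i 1)
      = 2 * n * (y i - x₀ i) * (r ^ 2 - qfun x₀ y)⁻¹ := by
  rw [(hasFDerivAt_vfun n r c x₀ y h).fderiv]
  rw [ContinuousLinearMap.smul_apply, qder_apply, smul_eq_mul]
  ring

lemma lapl_vfun (n : ℕ) (r c : ℝ) (x₀ x : EuclideanSpace ℝ (Fin m))
    (hx : 0 < r ^ 2 - qfun x₀ x) :
    lapl (vfun n r c x₀) x
      = 2 * m * n * (r ^ 2 - qfun x₀ x)⁻¹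
        + 4 * n * qfun x₀ x * ((r ^ 2 - qfun x₀ x) ^ 2)⁻¹ := by
  have hB : IsOpen {y : EuclideanSpace ℝ (Fin m) | 0 < r ^ 2 - qfun x₀ y} := by
    have : Continuous (fun y => r ^ 2 - qfun x₀ y) :=
      continuous_const.sub (contDiff_qfun x₀).continuous
    exact isOpen_lt continuous_const this
  have hmem : {y : EuclideanSpace ℝ (Fin m) | 0 < r ^ 2 - qfun x₀ y} ∈ nhds x :=
    hB.mem_nhds hx
  have term : ∀ i : Fin m,
      fderiv ℝ (fun y => fderiv ℝ (vfun n r c x₀) y (EuclideanSpace.single i 1)) x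
        (EuclideanSpace.single i 1)
      = 2 * n * (r ^ 2 - qfun x₀ x)⁻¹
        + 4 * n * (x i - x₀ i) ^ 2 * ((r ^ 2 - qfun x₀ x) ^ 2)⁻¹ := by
    intro i
    have hEq : (fun y => fderiv ℝ (vfun n r c x₀) y (EuclideanSpace.single i 1))
        =ᶠ[nhds x] (fun y => (2 * n * (y i - x₀ i)) * (r ^ 2 - qfun x₀ y)⁻¹) := by
      filter_upwards [hmem] with y hy
      rw [fderiv_vfun_single n r c x₀ y i (ne_of_gt hy)]
    rw [hEq.fderiv_eq]
    have h1 : HasFDerivAt (fun y : EuclideanSpace ℝ (Fin m) => 2 * (n:ℝ) * (y i - x₀ i))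
        ((2 * (n:ℝ)) • (EuclideanSpace.proj i : EuclideanSpace ℝ (Fin m) →L[ℝ] ℝ)) x := by
      simpa [mul_comm] using
        (((EuclideanSpace.proj (𝕜 := ℝ) i).hasFDerivAt.sub_const (x₀ i)).const_mul (2 * (n:ℝ)))
    have hg : HasFDerivAt (fun y => r ^ 2 - qfun x₀ y) (-qder x₀ x) x := by
      have := (hasFDerivAt_const (r ^ 2) x).sub (hasFDerivAt_qfun x₀ x); rw [zero_sub] at this; exact this
    have h2 : HasFDerivAt (fun y => (r ^ 2 - qfun x₀ y)⁻¹)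
        ((-((r ^ 2 - qfun x₀ x) ^ 2)⁻¹) • (-qder x₀ x)) x :=
      (hasDerivAt_inv (ne_of_gt hx)).comp_hasFDerivAt x hg
    rw [(h1.fun_mul h2).fderiv]
    simp only [ContinuousLinearMap.add_apply, ContinuousLinearMap.smul_apply,
      ContinuousLinearMap.neg_apply, qder_apply, smul_eq_mul]
    have hproj : (EuclideanSpace.proj (𝕜 := ℝ) i) (EuclideanSpace.single i (1:ℝ)) = 1 := by
      simp [EuclideanSpace.proj]
    rw [hproj]
    ring
  rw [lapl]
  simp only [term]
  rw [Finset.sum_add_distrib, Finset.sum_const, Finset.card_univ, Fintype.card_fin]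
  have : ∑ i : Fin m, 4 * (n:ℝ) * (x i - x₀ i) ^ 2 * ((r ^ 2 - qfun x₀ x) ^ 2)⁻¹
      = 4 * n * qfun x₀ x * ((r ^ 2 - qfun x₀ x) ^ 2)⁻¹ := by
    rw [qfun, ← Finset.sum_mul, ← Finset.mul_sum]
  rw [this]
  push_cast
  ring

lemma qfun_nonneg {m : ℕ} (x₀ x : EuclideanSpace ℝ (Fin m)) : 0 ≤ qfun x₀ x :=
  Finset.sum_nonneg fun j _ => sq_nonneg _

lemma qfun_self {m : ℕ} (x₀ : EuclideanSpace ℝ (Fin m)) : qfun x₀ x₀ = 0 := by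
  simp [qfun]

lemma continuous_qfun {m : ℕ} {x₀ : EuclideanSpace ℝ (Fin m)} : Continuous (qfun x₀) :=
  (contDiff_qfun x₀).continuous

set_option maxHeartbeats 1000000 in
/-- The Proposition of the Appendix (local form): if `S < 0` on an open set `Ω` then
solutions of `−Δu + α = S e^{(2/n)u}` on `Ω` with `α ∈ [α_*, 0]` are uniformly bounded
above on any compact `K ⊂ Ω`, by a constant depending only on `n, K, Ω, S, α_*`. -/
theorem local_upper_bound
    (n : ℕ) (hn : 1 ≤ n) (m : ℕ) (hm : m = 2 * n)
    (Ω : Set (EuclideanSpace ℝ (Fin m))) (hΩ : IsOpen Ω)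
    (K : Set (EuclideanSpace ℝ (Fin m))) (hK : IsCompact K) (hKΩ : K ⊆ Ω)
    (αstar : ℝ) (hαstar : αstar < 0)
    (S : EuclideanSpace ℝ (Fin m) → ℝ) (hS : ContinuousOn S Ω) (hSneg : ∀ x ∈ Ω, S x < 0) :
    ∃ C > (0 : ℝ), ∀ α ∈ Set.Icc αstar 0,
      ∀ u : EuclideanSpace ℝ (Fin m) → ℝ, ContDiffOn ℝ 2 u Ω →
        (∀ x ∈ Ω, -lapl u x + α = S x * Real.exp ((2 / (n : ℝ)) * u x)) →
        ∀ x ∈ K, u x ≤ C := by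
  rcases K.eq_empty_or_nonempty with hKe | hKne
  · exact ⟨1, one_pos, fun α _ u _ _ x hx => absurd hx (by simp [hKe])⟩
  have hn0 : (0:ℝ) < (n:ℝ) := by exact_mod_cast hn
  -- geometric setup
  obtain ⟨δ₀, hδ₀, hthick⟩ := hK.exists_thickening_subset_open hΩ hKΩ
  set r : ℝ := δ₀ / 2 with hrdef
  have hr : 0 < r := by positivity
  set K' : Set (EuclideanSpace ℝ (Fin m)) := cthickening r K with hK'def
  have hK'c : IsCompact K' := hK.cthickening
  have hK'Ω : K' ⊆ Ω :=
    (Metric.cthickening_subset_thickening' hδ₀ (by linarith) K).trans hthick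
  have hK'ne : K'.Nonempty := hKne.mono (self_subset_cthickening K)
  have hballK' : ∀ x₀ ∈ K, closedBall x₀ r ⊆ K' := fun x₀ hx₀ =>
    closedBall_subset_cthickening hx₀ r
  -- uniform negativity of S
  obtain ⟨z, hzK', hzmax⟩ := hK'c.exists_isMaxOn hK'ne (hS.mono hK'Ω)
  set δ : ℝ := -S z with hδdef
  have hδ : 0 < δ := by
    have := hSneg z (hK'Ω hzK'); simp [hδdef]; linarith
  have hSle : ∀ y ∈ K', S y ≤ -δ := by
    intro y hy
    have := hzmax hy
    simp only [hδdef, neg_neg]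
    exact this
  -- constants
  set A : ℝ := -αstar with hAdef
  have hA : 0 < A := by simp [hAdef]; linarith
  set M : ℝ := 2 * m * n * r ^ 2 + 4 * n * r ^ 2 + A * r ^ 4 with hMdef
  have hM : 0 ≤ M := by positivity
  set c : ℝ := (n : ℝ) / 2 * Real.log ((M + 1) / δ) with hcdef
  have hexp2c : Real.exp (2 / (n:ℝ) * c) = (M + 1) / δ := by
    rw [hcdef]
    rw [show 2 / (n:ℝ) * ((n:ℝ)/2 * Real.log ((M+1)/δ)) = Real.log ((M+1)/δ) by
      field_simp]
    exact Real.exp_log (by positivity)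
  refine ⟨max 1 (c - n * Real.log (r ^ 2)), lt_of_lt_of_le one_pos (le_max_left _ _),
    fun α hα u hu hequ x₀ hx₀ => ?_⟩
  -- the ball around x₀
  set B : Set (EuclideanSpace ℝ (Fin m)) := ball x₀ r with hBdef
  set Bc : Set (EuclideanSpace ℝ (Fin m)) := closedBall x₀ r with hBcdef
  have hBcK' : Bc ⊆ K' := hballK' x₀ hx₀
  have hBcΩ : Bc ⊆ Ω := hBcK'.trans hK'Ω
  have hBBc : B ⊆ Bc := ball_subset_closedBall
  have hBΩ : B ⊆ Ω := hBBc.trans hBcΩ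
  have hqB : ∀ y ∈ B, qfun x₀ y < r ^ 2 := by
    intro y hy
    rw [qfun_eq_dist]
    have : dist y x₀ < r := mem_ball.mp hy
    nlinarith [dist_nonneg (x := y) (y := x₀)]
  have hBpos : ∀ y ∈ B, (0:ℝ) < r ^ 2 - qfun x₀ y := fun y hy => by
    have := hqB y hy; linarith
  have hBsub : B ⊆ {y : EuclideanSpace ℝ (Fin m) | r ^ 2 - qfun x₀ y ≠ 0} :=
    fun y hy => ne_of_gt (hBpos y hy)
  set v : EuclideanSpace ℝ (Fin m) → ℝ := vfun n r c x₀ with hvdef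
  set w : EuclideanSpace ℝ (Fin m) → ℝ := fun y => u y - v y with hwdef
  -- bound u on Bc
  obtain ⟨ym, hym, hymmax⟩ := (isCompact_closedBall x₀ r).exists_isMaxOn
    ⟨x₀, mem_closedBall_self hr.le⟩ (hu.continuousOn.mono hBcΩ)
  set M₀ : ℝ := u ym with hM₀def
  have hM₀ : ∀ y ∈ Bc, u y ≤ M₀ := fun y hy => hymmax hy
  have hx₀B : x₀ ∈ B := mem_ball_self hr
  set a : ℝ := w x₀ with hadef
  have hvx₀ : v x₀ = c - n * Real.log (r ^ 2) := by
    simp [hvdef, vfun, qfun_self]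
  set ε : ℝ := Real.exp ((c - M₀ + a) / n) with hεdef
  have hε : 0 < ε := Real.exp_pos _
  have hεr : ε ≤ r ^ 2 := by
    have h1 : u x₀ ≤ M₀ := hM₀ x₀ (hBBc hx₀B)
    have h2 : (c - M₀ + a) / n ≤ Real.log (r ^ 2) := by
      rw [div_le_iff₀ hn0]
      have ha' : a = u x₀ - (c - n * Real.log (r ^ 2)) := by
        rw [hadef]; simp only [hwdef]; rw [hvx₀]
      rw [ha']
      linarith
    calc ε ≤ Real.exp (Real.log (r ^ 2)) := Real.exp_le_exp.mpr h2
      _ = r ^ 2 := Real.exp_log (by positivity)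
  -- the compact sublevel set D
  set D : Set (EuclideanSpace ℝ (Fin m)) := {y | qfun x₀ y ≤ r ^ 2 - ε} with hDdef
  have hDBc : D ⊆ Bc := by
    intro y hy
    have hq : qfun x₀ y ≤ r ^ 2 - ε := hy
    rw [qfun_eq_dist] at hq
    rw [hBcdef, mem_closedBall]
    nlinarith [dist_nonneg (x := y) (y := x₀)]
  have hDB : D ⊆ B := by
    intro y hy
    have hq : qfun x₀ y ≤ r ^ 2 - ε := hy
    rw [qfun_eq_dist] at hq
    rw [hBdef, mem_ball]
    nlinarith [dist_nonneg (x := y) (y := x₀)]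
  have hDclosed : IsClosed D := isClosed_le continuous_qfun continuous_const
  have hDcompact : IsCompact D :=
    (isCompact_closedBall x₀ r).of_isClosed_subset hDclosed hDBc
  have hx₀D : x₀ ∈ D := by
    show qfun x₀ x₀ ≤ r ^ 2 - ε
    rw [qfun_self]; linarith
  have hwCD : ContDiffOn ℝ 2 w B :=
    (hu.mono hBΩ).sub ((contDiffOn_vfun n r c x₀).mono hBsub)
  obtain ⟨x₁, hx₁D, hx₁max⟩ := hDcompact.exists_isMaxOn ⟨x₀, hx₀D⟩
    (hwCD.continuousOn.mono hDB)
  have hx₁B : x₁ ∈ B := hDB hx₁D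
  -- x₁ is a global max of w on B
  have hglobal : ∀ y ∈ B, w y ≤ w x₁ := by
    intro y hy
    by_contra hgt
    push_neg at hgt
    have hax₁ : a ≤ w x₁ := hx₁max hx₀D
    have haw : a ≤ w y := le_of_lt (lt_of_le_of_lt hax₁ hgt)
    have hgy := hBpos y hy
    have hvy : v y ≤ M₀ - a := by
      have h1 : u y ≤ M₀ := hM₀ y (hBBc hy)
      simp only [hwdef] at haw
      linarith
    have hvyeq : v y = c - n * Real.log (r ^ 2 - qfun x₀ y) := by rw [hvdef]; rfl
    rw [hvyeq] at hvy
    have hlog : (c - M₀ + a) / n ≤ Real.log (r ^ 2 - qfun x₀ y) := by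
      rw [div_le_iff₀ hn0]
      linarith
    have hgε : ε ≤ r ^ 2 - qfun x₀ y := by
      calc ε ≤ Real.exp (Real.log (r ^ 2 - qfun x₀ y)) := Real.exp_le_exp.mpr hlog
        _ = _ := Real.exp_log hgy
    have hyD : y ∈ D := by
      show qfun x₀ y ≤ r ^ 2 - ε
      linarith
    exact absurd (hx₁max hyD) (not_le.mpr hgt)
  have hlocmax : IsLocalMax w x₁ := by
    filter_upwards [isOpen_ball.mem_nhds hx₁B] with y hy using hglobal y hy
  -- maximum principle at x₁
  have hwlapl : lapl w x₁ ≤ 0 := lapl_nonpos_at_localMax isOpen_ball hwCD hx₁B hlocmax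
  have hsub : lapl w x₁ = lapl u x₁ - lapl v x₁ :=
    lapl_sub isOpen_ball (hu.mono hBΩ) ((contDiffOn_vfun n r c x₀).mono hBsub) hx₁B
  have hlaplle : lapl u x₁ ≤ lapl v x₁ := by linarith [hsub ▸ hwlapl]
  have hx₁Ω : x₁ ∈ Ω := hBΩ hx₁B
  have heq := hequ x₁ hx₁Ω
  set g : ℝ := r ^ 2 - qfun x₀ x₁ with hgdef
  set q : ℝ := qfun x₀ x₁ with hqdef
  have hg : 0 < g := hBpos x₁ hx₁B
  have hq0 : 0 ≤ q := qfun_nonneg _ _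
  have hgr : g ≤ r ^ 2 := by rw [hgdef]; linarith
  have hqr : q ≤ r ^ 2 := by rw [hqdef]; linarith [hqB x₁ hx₁B]
  have hlv : lapl v x₁ = 2 * m * n * g⁻¹ + 4 * n * q * (g ^ 2)⁻¹ :=
    lapl_vfun n r c x₀ x₁ hg
  have hSx₁ : S x₁ ≤ -δ := hSle x₁ (hBcK' (hBBc hx₁B))
  have hEu : 0 < Real.exp (2 / (n:ℝ) * u x₁) := Real.exp_pos _
  have hnum : 2 * m * n * g + 4 * n * q + A * g ^ 2 ≤ M + 1 := by
    have hg2 : g ^ 2 ≤ r ^ 4 := by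
      have := pow_le_pow_left₀ hg.le hgr 2
      calc g ^ 2 ≤ (r ^ 2) ^ 2 := this
        _ = r ^ 4 := by ring
    have f1 : 2 * (m:ℝ) * n * g ≤ 2 * m * n * r ^ 2 :=
      mul_le_mul_of_nonneg_left hgr (by positivity)
    have f2 : 4 * (n:ℝ) * q ≤ 4 * n * r ^ 2 :=
      mul_le_mul_of_nonneg_left hqr (by positivity)
    have f3 : A * g ^ 2 ≤ A * r ^ 4 := mul_le_mul_of_nonneg_left hg2 hA.le
    rw [hMdef]
    linarith
  have hg2pos : (0:ℝ) < g ^ 2 := by positivity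
  have hlvA : lapl v x₁ + A ≤ (M + 1) * (g ^ 2)⁻¹ := by
    rw [hlv]
    have h1 : 2 * m * n * g⁻¹ + 4 * n * q * (g ^ 2)⁻¹ + A
        = (2 * m * n * g + 4 * n * q + A * g ^ 2) / g ^ 2 := by
      field_simp
    rw [h1, ← div_eq_mul_inv]
    gcongr
  have hstep : δ * Real.exp (2 / (n:ℝ) * u x₁) ≤ (M + 1) * (g ^ 2)⁻¹ := by
    have h1 : lapl u x₁ = α - S x₁ * Real.exp (2 / (n:ℝ) * u x₁) := by linarith [heq]
    have h2 : δ * Real.exp (2 / (n:ℝ) * u x₁)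
        ≤ (-S x₁) * Real.exp (2 / (n:ℝ) * u x₁) :=
      mul_le_mul_of_nonneg_right (by linarith) hEu.le
    have hαA : -A ≤ α := by rw [hAdef]; linarith [hα.1]
    nlinarith [h1, h2, hlaplle, hlvA, hαA]
  have hEv : Real.exp (2 / (n:ℝ) * v x₁) = (M + 1) / δ * (g ^ 2)⁻¹ := by
    have hveq : v x₁ = c - n * Real.log g := by rw [hvdef, hgdef, hqdef]; rfl
    have harg : 2 / (n:ℝ) * v x₁ = 2 / (n:ℝ) * c - 2 * Real.log g := by
      rw [hveq]; field_simp
    have hexp2 : Real.exp (2 * Real.log g) = g ^ 2 := by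
      rw [show (2:ℝ) * Real.log g = Real.log g + Real.log g by ring,
        Real.exp_add, Real.exp_log hg]
      ring
    rw [harg, Real.exp_sub, hexp2c, hexp2, div_eq_mul_inv]
  have hEuEv : Real.exp (2 / (n:ℝ) * u x₁) ≤ Real.exp (2 / (n:ℝ) * v x₁) := by
    rw [hEv]
    have hE' : Real.exp (2 / (n:ℝ) * u x₁) ≤ ((M + 1) * (g ^ 2)⁻¹) / δ :=
      (le_div_iff₀ hδ).mpr (by linarith [hstep])
    calc Real.exp (2 / (n:ℝ) * u x₁) ≤ ((M + 1) * (g ^ 2)⁻¹) / δ := hE'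
      _ = (M + 1) / δ * (g ^ 2)⁻¹ := by ring
  have huv : u x₁ ≤ v x₁ := by
    have h := Real.exp_le_exp.mp hEuEv
    have h2n : 0 < 2 / (n:ℝ) := by positivity
    nlinarith [h, h2n]
  have hwx₀ : w x₀ ≤ w x₁ := hx₁max hx₀D
  have hfin : u x₀ ≤ v x₀ := by
    simp only [hwdef] at hwx₀
    linarith
  rw [hvx₀] at hfin
  exact le_trans hfin (le_max_right _ _)
end
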